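/- arXiv:1309.1974 — 6 statements merged into one kernel-verified Lean document; each statement's English description precedes it below -/
import Mathlib

section
/- Let n ≥ 1 be an integer, let 0 < p < 1 and 0 < t < 1, and let λ = n − α < 0 (i.e. α > n) satisfy 1/p + 1/t + λ/n = 2. Then there exists a constant N = N(n, α, p) > 0 such that for all nonnegative measurable functions f with ∫_{ℝⁿ}|f|^p dx < ∞ and g with ∫_{ℝⁿ}|g|^t dx < ∞ one has ∫_{ℝⁿ}∫_{ℝⁿ} f(x)|x−y|^{α−n} g(y) dx dy ≥ N · (∫_{ℝⁿ}|f|^p dx)^{1/p} · (∫_{ℝⁿ}|g|^t dx)^{1/t}. -/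
/-!
Write `I(f, g)` for the double integral and `A(f) = ∫₀^∞ |{f > s}|^γ ds`, where
`γ = 1 + (α - n)/n = 1/p + 1/t - 1`. Removing from a set `S` a ball around `y` of half its
measure shows `∫_S |x - y|^(α-n) dx ≳ |S|^γ`, so the layer-cake formula in `x` gives
`I(f, g) ≳ A(f) ‖g‖₁` and, symmetrically, `I(f, g) ≳ A(g) ‖f‖₁`.
The distribution function `φ(s) = |{f > s}|` is decreasing, hence `s φ(s) ≤ ‖f‖₁` and
`s φ(s)^γ ≤ A(f)`; splitting `‖f‖_p^p = p ∫₀^∞ φ(s) s^(p-1) ds` where these two bounds balance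
gives `‖f‖_p ≲ A(f)^θ ‖f‖₁^(1-θ)` with `θ = (1/p - 1)/(γ - 1)`, and likewise
`‖g‖_t ≲ A(g)^(1-θ) ‖g‖₁^θ`. Hence `‖f‖_p ‖g‖_t ≲ (A(f) ‖g‖₁)^θ (A(g) ‖f‖₁)^(1-θ) ≲ I(f, g)`.
-/

open MeasureTheory ENNReal Set Metric

namespace ENNReal

lemma rpow_mul_rpow_one_sub_le {x y z : ℝ≥0∞} {θ : ℝ} (h0 : 0 ≤ θ) (h1 : θ ≤ 1)
    (hx : x ≤ z) (hy : y ≤ z) : x ^ θ * y ^ (1 - θ) ≤ z :=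
  calc x ^ θ * y ^ (1 - θ) ≤ z ^ θ * z ^ (1 - θ) := by gcongr
    _ = z := by rw [← rpow_add_of_nonneg _ _ h0 (by linarith), add_sub_cancel, rpow_one]

lemma mul_rpow_mul_rpow_le {c a b a' b' z : ℝ≥0∞} {θ : ℝ} (h0 : 0 ≤ θ) (h1 : θ ≤ 1)
    (h : c * a * b' ≤ z) (h' : c * a' * b ≤ z) :
    c * (a ^ θ * b ^ (1 - θ)) * (a' ^ (1 - θ) * b' ^ θ) ≤ z := by
  have h1' : 0 ≤ 1 - θ := by linarith
  calc c * (a ^ θ * b ^ (1 - θ)) * (a' ^ (1 - θ) * b' ^ θ)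
      = (c ^ θ * c ^ (1 - θ)) * (a ^ θ * b ^ (1 - θ)) * (a' ^ (1 - θ) * b' ^ θ) := by
        rw [← rpow_add_of_nonneg _ _ h0 h1', add_sub_cancel, rpow_one]
    _ = (c * a * b') ^ θ * (c * a' * b) ^ (1 - θ) := by
        simp only [mul_rpow_of_nonneg _ _ h0, mul_rpow_of_nonneg _ _ h1']
        ring
    _ ≤ z := rpow_mul_rpow_one_sub_le h0 h1 h h'

lemma le_rpow_inv_mul_of_ofReal_mul_rpow_le {u C : ℝ≥0∞} {s δ : ℝ} (hs : 0 < s) (hδ : 0 < δ)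
    (h : ENNReal.ofReal s * u ^ δ ≤ C) : u ≤ C ^ δ⁻¹ * ENNReal.ofReal (s ^ (-δ⁻¹)) := by
  have hu : u = (ENNReal.ofReal s * u ^ δ) ^ δ⁻¹ * ENNReal.ofReal (s ^ (-δ⁻¹)) := by
    rw [mul_rpow_of_nonneg _ _ (by positivity), ← rpow_mul, mul_inv_cancel₀ hδ.ne', rpow_one,
      ofReal_rpow_of_pos hs, mul_comm (ENNReal.ofReal (s ^ δ⁻¹)), mul_assoc,
      ← ofReal_mul (by positivity), ← Real.rpow_add hs]
    simp
  rw [hu]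
  gcongr

end ENNReal

lemma ofReal_rpow_neg_inv_mul_mul_rpow_rpow_inv {K p : ℝ} (hK : 0 < K) (hp : 0 < p)
    (x : ℝ≥0∞) : ENNReal.ofReal (K ^ (-(1 / p))) * (ENNReal.ofReal K * x ^ p) ^ (1 / p) = x := by
  rw [mul_rpow_of_nonneg _ _ (by positivity), ← rpow_mul, mul_one_div_cancel hp.ne', rpow_one,
    ← mul_assoc, ofReal_rpow_of_pos hK, ← ofReal_mul (by positivity), ← Real.rpow_add hK,
    neg_add_cancel, Real.rpow_zero, ofReal_one, one_mul]

lemma setLIntegral_Ioc_ofReal_rpow {e : ℝ} (he : 0 < e) {S : ℝ} (hS : 0 ≤ S) :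
    ∫⁻ t in Ioc 0 S, ENNReal.ofReal (t ^ (e - 1)) = ENNReal.ofReal (S ^ e / e) := by
  have he' : -1 < e - 1 := by linarith
  rw [← ofReal_integral_eq_lintegral_ofReal (intervalIntegral.intervalIntegrable_rpow' he').1
    ((ae_restrict_iff' measurableSet_Ioc).2 (.of_forall fun t ht => by positivity [ht.1.le])),
    ← intervalIntegral.integral_of_le hS, integral_rpow (.inl he'), sub_add_cancel,
    Real.zero_rpow he.ne', sub_zero]

lemma setLIntegral_Ioi_ofReal_rpow {e : ℝ} (he : e < 0) {S : ℝ} (hS : 0 < S) :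
    ∫⁻ t in Ioi S, ENNReal.ofReal (t ^ (e - 1)) = ENNReal.ofReal (S ^ e / -e) := by
  have he' : e - 1 < -1 := by linarith
  rw [← ofReal_integral_eq_lintegral_ofReal (integrableOn_Ioi_rpow_of_lt he' hS)
    ((ae_restrict_iff' measurableSet_Ioi).2 (.of_forall fun t ht => by
      positivity [hS.trans ht |>.le])),
    integral_Ioi_rpow_of_lt he' hS, sub_add_cancel, neg_div, div_neg]

section Antitone

variable {φ : ℝ → ℝ≥0∞}

lemma ofReal_mul_le_setLIntegral_Ioi_of_antitone (hφ : Antitone φ) (s : ℝ) :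
    ENNReal.ofReal s * φ s ≤ ∫⁻ u in Ioi 0, φ u :=
  calc ENNReal.ofReal s * φ s = ∫⁻ _ in Ioo 0 s, φ s := by
        rw [setLIntegral_const, Real.volume_Ioo, sub_zero, mul_comm]
    _ ≤ ∫⁻ u in Ioo 0 s, φ u := setLIntegral_mono' measurableSet_Ioo fun u hu => hφ hu.2.le
    _ ≤ ∫⁻ u in Ioi 0, φ u := lintegral_mono_set fun u hu => hu.1

lemma setLIntegral_rpow_ne_zero_of_antitone (hφ : Antitone φ) {δ s : ℝ} (hδ : 0 ≤ δ)
    (hs : 0 < s) (hφs : φ s ≠ 0) : ∫⁻ u in Ioi 0, φ u ^ δ ≠ 0 :=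
  (lt_of_lt_of_le (ENNReal.mul_pos (by simpa using hs) (rpow_pos_of_nonneg
      (pos_iff_ne_zero.2 hφs) hδ).ne')
    (ofReal_mul_le_setLIntegral_Ioi_of_antitone (fun u v huv => rpow_le_rpow (hφ huv) hδ) s)).ne'

lemma antitone_mul_rpow_le (hφ : Antitone φ) {δ t : ℝ} (hδ : 0 < δ) (ht : 0 < t) (q : ℝ) :
    φ t * ENNReal.ofReal (t ^ q) ≤
      (∫⁻ u in Ioi 0, φ u ^ δ) ^ δ⁻¹ * ENNReal.ofReal (t ^ (q - δ⁻¹)) := by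
  have hφδ : Antitone fun u => φ u ^ δ := fun u v huv => rpow_le_rpow (hφ huv) hδ.le
  calc φ t * ENNReal.ofReal (t ^ q)
      ≤ (∫⁻ u in Ioi 0, φ u ^ δ) ^ δ⁻¹ * ENNReal.ofReal (t ^ (-δ⁻¹)) * ENNReal.ofReal (t ^ q) := by
        gcongr
        exact le_rpow_inv_mul_of_ofReal_mul_rpow_le ht hδ
          (ofReal_mul_le_setLIntegral_Ioi_of_antitone hφδ t)
    _ = _ := by
        rw [mul_assoc, ← ofReal_mul (by positivity), ← Real.rpow_add ht, neg_add_eq_sub]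

lemma setLIntegral_antitone_mul_rpow_le (hφ : Antitone φ) {p γ S : ℝ} (hp : p < 1) (hγ : 0 < γ)
    (hpγ : γ⁻¹ < p) (hS : 0 < S) :
    ∫⁻ t in Ioi 0, φ t * ENNReal.ofReal (t ^ (p - 1)) ≤
      (∫⁻ t in Ioi 0, φ t ^ γ) ^ γ⁻¹ * ENNReal.ofReal (S ^ (p - γ⁻¹) / (p - γ⁻¹)) +
        (∫⁻ t in Ioi 0, φ t) * ENNReal.ofReal (S ^ (p - 1) / (1 - p)) := by
  conv_lhs => rw [← Ioc_union_Ioi_eq_Ioi hS.le,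
    lintegral_union measurableSet_Ioi Ioc_disjoint_Ioi_same]
  rw [← setLIntegral_Ioc_ofReal_rpow (sub_pos.2 hpγ) hS.le, ← lintegral_const_mul _ (by fun_prop),
    show 1 - p = -(p - 1) by ring, ← setLIntegral_Ioi_ofReal_rpow (by linarith) hS,
    ← lintegral_const_mul _ (by fun_prop)]
  gcongr ?_ + ?_
  · refine setLIntegral_mono' measurableSet_Ioc fun t ht => ?_
    convert antitone_mul_rpow_le hφ hγ ht.1 (p - 1) using 4
    ring
  · refine setLIntegral_mono' measurableSet_Ioi fun t ht => ?_
    convert antitone_mul_rpow_le hφ one_pos (hS.trans ht) (p - 1) using 2 <;> simp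

/-- The split point at which the two terms of `setLIntegral_antitone_mul_rpow_le` are equal. -/
lemma exists_balancing_split_point {a b p γ : ℝ} (ha : 0 < a) (hb : 0 < b) (hp : 0 < p)
    (hγ : 1 < γ) :
    ∃ S > 0, a ^ γ⁻¹ * S ^ (p - γ⁻¹) = (a ^ ((1 / p - 1) / (γ - 1)) *
        b ^ (1 - (1 / p - 1) / (γ - 1))) ^ p ∧
      b * S ^ (p - 1) = (a ^ ((1 / p - 1) / (γ - 1)) * b ^ (1 - (1 / p - 1) / (γ - 1))) ^ p := by
  have hγ0 : γ ≠ 0 := by positivity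
  have hγ1 : γ - 1 ≠ 0 := by linarith
  refine ⟨Real.exp ((γ * Real.log b - Real.log a) / (γ - 1)), Real.exp_pos _, ?_, ?_⟩ <;>
  · rw [← Real.exp_log ha, ← Real.exp_log hb]
    simp only [← Real.exp_mul, ← Real.exp_add, Real.log_exp]
    congr 1
    field_simp
    ring

lemma setLIntegral_antitone_mul_rpow_le_rpow (hφ : Antitone φ) {p γ : ℝ} (hp0 : 0 < p)
    (hp1 : p < 1) (hγ : 1 / p < γ) :
    ∫⁻ t in Ioi 0, φ t * ENNReal.ofReal (t ^ (p - 1)) ≤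
      ENNReal.ofReal (1 / (p - γ⁻¹) + 1 / (1 - p)) *
        ((∫⁻ t in Ioi 0, φ t ^ γ) ^ ((1 / p - 1) / (γ - 1)) *
          (∫⁻ t in Ioi 0, φ t) ^ (1 - (1 / p - 1) / (γ - 1))) ^ p := by
  have h1p : 1 < 1 / p := by rw [lt_div_iff₀ hp0]; linarith
  have hγ1 : 1 < γ := h1p.trans hγ
  have hpγ : γ⁻¹ < p := by rw [one_div, inv_lt_comm₀ hp0 (by linarith)] at hγ; exact hγ
  set θ := (1 / p - 1) / (γ - 1)
  have hθ0 : 0 < θ := div_pos (by linarith) (by linarith)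
  have hθ1 : θ < 1 := by rw [div_lt_one (by linarith)]; linarith
  set L := 1 / (p - γ⁻¹) + 1 / (1 - p)
  have hL : 0 < L := add_pos (one_div_pos.2 (by linarith)) (one_div_pos.2 (by linarith))
  set A := ∫⁻ t in Ioi 0, φ t ^ γ
  set F := ∫⁻ t in Ioi 0, φ t
  by_cases hφ0 : ∀ s > 0, φ s = 0
  · rw [setLIntegral_congr_fun measurableSet_Ioi fun s hs => by rw [hφ0 s hs, zero_mul]]
    simp
  obtain ⟨s, hs, hφs⟩ := not_forall₂.1 hφ0
  have hA0 : A ≠ 0 := setLIntegral_rpow_ne_zero_of_antitone hφ (by linarith) hs hφs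
  have hF0 : F ≠ 0 := by simpa using setLIntegral_rpow_ne_zero_of_antitone hφ zero_le_one hs hφs
  rcases eq_or_ne A ⊤ with hAt | hAt
  · simp [hAt, top_rpow_of_pos hθ0, hF0, hθ1.le, hp0, hL]
  rcases eq_or_ne F ⊤ with hFt | hFt
  · simp [hFt, top_rpow_of_pos (sub_pos.2 hθ1), hA0, hθ0.le, hp0, hL]
  obtain ⟨S, hS, hbalA, hbalF⟩ := exists_balancing_split_point (toReal_pos hA0 hAt)
    (toReal_pos hF0 hFt) hp0 hγ1
  refine (setLIntegral_antitone_mul_rpow_le hφ hp1 (by linarith) hpγ hS).trans_eq ?_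
  change A ^ γ⁻¹ * _ + F * _ = _
  rw [← ofReal_toReal hAt, ← ofReal_toReal hFt,
    ofReal_rpow_of_nonneg toReal_nonneg (inv_nonneg.2 (by linarith : 0 ≤ γ)),
    ofReal_rpow_of_nonneg toReal_nonneg hθ0.le,
    ofReal_rpow_of_nonneg toReal_nonneg (sub_pos.2 hθ1).le, ← ofReal_mul (by positivity),
    ← ofReal_mul toReal_nonneg, ← ofReal_add (by positivity) (by positivity),
    ← ofReal_mul (by positivity), ofReal_rpow_of_nonneg (by positivity) hp0.le,
    ← ofReal_mul hL.le]
  congr 1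
  rw [mul_div_assoc', mul_div_assoc', hbalA, hbalF]
  ring

theorem exists_pos_mul_rpow_le_of_antitone {p γ : ℝ} (hp0 : 0 < p) (hp1 : p < 1)
    (hγ : 1 / p < γ) :
    ∃ c : ℝ, 0 < c ∧ ∀ φ : ℝ → ℝ≥0∞, Antitone φ →
      ENNReal.ofReal c *
          (ENNReal.ofReal p * ∫⁻ t in Ioi 0, φ t * ENNReal.ofReal (t ^ (p - 1))) ^ (1 / p) ≤
        (∫⁻ t in Ioi 0, φ t ^ γ) ^ ((1 / p - 1) / (γ - 1)) *
          (∫⁻ t in Ioi 0, φ t) ^ (1 - (1 / p - 1) / (γ - 1)) := by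
  have h1p : 1 < 1 / p := by rw [lt_div_iff₀ hp0]; linarith
  have hγ1 : 1 < γ := h1p.trans hγ
  have hpγ : γ⁻¹ < p := by rw [one_div, inv_lt_comm₀ hp0 (by linarith)] at hγ; exact hγ
  set L := 1 / (p - γ⁻¹) + 1 / (1 - p)
  have hL : 0 < L := add_pos (one_div_pos.2 (by linarith)) (one_div_pos.2 (by linarith))
  refine ⟨(p * L) ^ (-(1 / p)), by positivity, fun φ hφ => le_of_le_of_eq
    (mul_le_mul_right (rpow_le_rpow ?_ (by positivity)) _)
    (ofReal_rpow_neg_inv_mul_mul_rpow_rpow_inv (by positivity) hp0 _)⟩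
  rw [ofReal_mul hp0.le, mul_assoc]
  exact mul_le_mul_right (setLIntegral_antitone_mul_rpow_le_rpow hφ hp0 hp1 hγ) _

end Antitone

theorem exists_pos_mul_lintegral_rpow_le {p γ : ℝ} (hp0 : 0 < p) (hp1 : p < 1)
    (hγ : 1 / p < γ) :
    ∃ c : ℝ, 0 < c ∧ ∀ {X : Type*} [MeasurableSpace X] (μ : Measure X) (f : X → ℝ),
      Measurable f → (∀ x, 0 ≤ f x) →
      ENNReal.ofReal c * (∫⁻ x, ENNReal.ofReal (f x ^ p) ∂μ) ^ (1 / p) ≤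
        (∫⁻ s in Ioi 0, μ {x | s < f x} ^ γ) ^ ((1 / p - 1) / (γ - 1)) *
          (∫⁻ x, ENNReal.ofReal (f x) ∂μ) ^ (1 - (1 / p - 1) / (γ - 1)) := by
  obtain ⟨c, hc, hφ⟩ := exists_pos_mul_rpow_le_of_antitone hp0 hp1 hγ
  refine ⟨c, hc, fun μ f hf hf0 => ?_⟩
  rw [lintegral_rpow_eq_lintegral_meas_lt_mul μ (ae_of_all _ hf0) hf.aemeasurable hp0,
    lintegral_eq_lintegral_meas_lt μ (ae_of_all _ hf0) hf.aemeasurable]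
  exact hφ _ fun s₁ s₂ hs => measure_mono fun x hx => hs.trans_lt hx

lemma lintegral_ofReal_mul_eq_lintegral_setLIntegral_lt {X : Type*} [MeasurableSpace X]
    (μ : Measure X) {f : X → ℝ} {h : X → ℝ≥0∞} (hf : Measurable f) (hf0 : ∀ x, 0 ≤ f x)
    (hh : Measurable h) :
    ∫⁻ x, ENNReal.ofReal (f x) * h x ∂μ = ∫⁻ s in Ioi 0, ∫⁻ x in {x | s < f x}, h x ∂μ :=
  calc ∫⁻ x, ENNReal.ofReal (f x) * h x ∂μ = ∫⁻ x, ENNReal.ofReal (f x) ∂μ.withDensity h := by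
        rw [lintegral_withDensity_eq_lintegral_mul _ hh hf.ennreal_ofReal]
        simp only [Pi.mul_apply, mul_comm]
    _ = ∫⁻ s in Ioi 0, ∫⁻ x in {x | s < f x}, h x ∂μ := by
        rw [lintegral_eq_lintegral_meas_lt _ (ae_of_all _ hf0) hf.aemeasurable]
        simp only [withDensity_apply _ (measurableSet_lt measurable_const hf)]

section Kernel

variable {X : Type*} [MeasurableSpace X] {μ : Measure X} {K : X → X → ℝ≥0∞} {C : ℝ≥0∞} {γ : ℝ}

lemma mul_lintegral_le_lintegral_lintegral [SFinite μ] (hK : Measurable (Function.uncurry K))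
    (hKS : ∀ y S, C * μ S ^ γ ≤ ∫⁻ x in S, K x y ∂μ) {f g : X → ℝ} (hf : Measurable f)
    (hg : Measurable g) (hf0 : ∀ x, 0 ≤ f x) :
    C * (∫⁻ s in Ioi 0, μ {x | s < f x} ^ γ) * ∫⁻ y, ENNReal.ofReal (g y) ∂μ ≤
      ∫⁻ x, ∫⁻ y, ENNReal.ofReal (f x) * K x y * ENNReal.ofReal (g y) ∂μ ∂μ := by
  have hinner : ∀ y, C * ∫⁻ s in Ioi 0, μ {x | s < f x} ^ γ ≤
      ∫⁻ x, ENNReal.ofReal (f x) * K x y ∂μ := fun y => by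
    rw [lintegral_ofReal_mul_eq_lintegral_setLIntegral_lt μ hf hf0 hK.of_uncurry_right]
    exact (lintegral_const_mul_le _ _).trans (lintegral_mono fun s => hKS y _)
  rw [lintegral_lintegral_swap (by fun_prop)]
  exact (lintegral_const_mul_le _ _).trans <| lintegral_mono fun y =>
    (mul_le_mul_left (hinner y) _).trans (lintegral_mul_const_le _ _)

lemma mul_lintegral_le_lintegral_lintegral_of_symm [SFinite μ]
    (hK : Measurable (Function.uncurry K)) (hKsymm : ∀ x y, K x y = K y x)
    (hKS : ∀ y S, C * μ S ^ γ ≤ ∫⁻ x in S, K x y ∂μ) {f g : X → ℝ} (hf : Measurable f)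
    (hg : Measurable g) (hg0 : ∀ x, 0 ≤ g x) :
    C * (∫⁻ s in Ioi 0, μ {x | s < g x} ^ γ) * ∫⁻ y, ENNReal.ofReal (f y) ∂μ ≤
      ∫⁻ x, ∫⁻ y, ENNReal.ofReal (f x) * K x y * ENNReal.ofReal (g y) ∂μ ∂μ := by
  rw [lintegral_lintegral_swap (by fun_prop)]
  convert mul_lintegral_le_lintegral_lintegral hK hKS hg hf hg0 using 5
  rw [hKsymm]
  ring

end Kernel

lemma ofReal_rpow_mul_measure_sub_le_setLIntegral_dist_rpow {X : Type*} [PseudoMetricSpace X]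
    [MeasurableSpace X] [OpensMeasurableSpace X] (μ : Measure X) (y : X) (S : Set X) {r β : ℝ}
    (hr : 0 ≤ r) (hβ : 0 ≤ β) :
    ENNReal.ofReal (r ^ β) * (μ S - μ (ball y r)) ≤
      ∫⁻ x in S, ENNReal.ofReal (dist x y ^ β) ∂μ :=
  calc ENNReal.ofReal (r ^ β) * (μ S - μ (ball y r))
      ≤ ENNReal.ofReal (r ^ β) * μ ((ball y r)ᶜ ∩ S) := by
        rw [inter_comm, ← sdiff_eq]
        gcongr
        exact le_measure_sdiff
    _ = ∫⁻ x in S, (ball y r)ᶜ.indicator (fun _ => ENNReal.ofReal (r ^ β)) x ∂μ := by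
        rw [lintegral_indicator measurableSet_ball.compl, setLIntegral_const,
          Measure.restrict_apply measurableSet_ball.compl, mul_comm]
    _ ≤ ∫⁻ x in S, ENNReal.ofReal (dist x y ^ β) ∂μ := lintegral_mono <| indicator_le
        fun x hx => ofReal_le_ofReal (Real.rpow_le_rpow hr (by simpa using hx) hβ)

open Module in
theorem exists_pos_mul_measure_rpow_le_setLIntegral_dist_rpow {E : Type*}
    [NormedAddCommGroup E] [NormedSpace ℝ E] [FiniteDimensional ℝ E] [Nontrivial E]
    [MeasurableSpace E] [BorelSpace E] (μ : Measure E) [μ.IsAddHaarMeasure] {β : ℝ}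
    (hβ : 0 < β) :
    ∃ c : ℝ, 0 < c ∧ ∀ (y : E) (S : Set E),
      ENNReal.ofReal c * μ S ^ (1 + β / finrank ℝ E) ≤
        ∫⁻ x in S, ENNReal.ofReal (dist x y ^ β) ∂μ := by
  set d := finrank ℝ E
  have hd : d ≠ 0 := finrank_pos.ne'
  set ω := (μ (ball 0 1)).toReal
  have hω : 0 < ω := toReal_pos (measure_ball_pos μ _ one_pos).ne' measure_ball_lt_top.ne
  refine ⟨(2 * ω) ^ (-(β / d)) / 2, by positivity, fun y S => ?_⟩
  rcases eq_or_ne (μ S) ⊤ with hSt | hSt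
  · calc _ ≤ ⊤ := le_top
      _ = ENNReal.ofReal (1 ^ β) * (μ S - μ (ball y 1)) := by
          simp [hSt, measure_ball_lt_top.ne]
      _ ≤ _ := ofReal_rpow_mul_measure_sub_le_setLIntegral_dist_rpow μ y S zero_le_one hβ.le
  set v := (μ S).toReal
  set r := (v / (2 * ω)) ^ (d : ℝ)⁻¹
  have hball : μ (ball y r) = μ S / 2 := by
    rw [Measure.addHaar_ball μ y (by positivity), Real.rpow_inv_natCast_pow (by positivity) hd,
      ← ofReal_toReal (measure_ball_lt_top (μ := μ) (x := 0) (r := 1)).ne,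
      ← ofReal_toReal hSt, ← ofReal_mul (by positivity), ← ofReal_ofNat 2,
      ← ofReal_div_of_pos two_pos]
    congr 1
    field_simp
    exact mul_comm _ _
  calc ENNReal.ofReal ((2 * ω) ^ (-(β / d)) / 2) * μ S ^ (1 + β / d)
      = ENNReal.ofReal (r ^ β) * (μ S / 2) := by
        rw [← ofReal_toReal hSt, ofReal_rpow_of_nonneg toReal_nonneg (by positivity),
          ← ofReal_mul (by positivity), ← ofReal_ofNat 2, ← ofReal_div_of_pos two_pos,
          ← ofReal_mul (by positivity)]
        congr 1
        rw [← Real.rpow_mul (by positivity), Real.div_rpow toReal_nonneg (by positivity),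
          Real.rpow_add' toReal_nonneg (by positivity), Real.rpow_neg (by positivity),
          Real.rpow_one]
        ring_nf
    _ = ENNReal.ofReal (r ^ β) * (μ S - μ (ball y r)) := by rw [hball, sub_half hSt]
    _ ≤ _ := ofReal_rpow_mul_measure_sub_le_setLIntegral_dist_rpow μ y S (by positivity) hβ.le

lemma ofReal_integral_abs_rpow_rpow_le {X : Type*} [MeasurableSpace X] (μ : Measure X)
    {f : X → ℝ} (hf0 : ∀ x, 0 ≤ f x) {p : ℝ} (hp : 0 < p) :
    ENNReal.ofReal ((∫ x, |f x| ^ p ∂μ) ^ (1 / p)) ≤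
      (∫⁻ x, ENNReal.ofReal (f x ^ p) ∂μ) ^ (1 / p) := by
  have hint : 0 ≤ ∫ x, |f x| ^ p ∂μ := integral_nonneg fun x => by positivity
  rw [← ofReal_rpow_of_nonneg hint (by positivity), ← Real.enorm_eq_ofReal hint]
  gcongr
  refine (enorm_integral_le_lintegral_enorm _).trans_eq (lintegral_congr fun x => ?_)
  rw [Real.enorm_eq_ofReal (by positivity), abs_of_nonneg (hf0 x)]

theorem reversed_HLS_of_setLIntegral_kernel_ge {X : Type*} [MeasurableSpace X] {μ : Measure X}
    [SFinite μ] {K : X → X → ℝ≥0∞} (hK : Measurable (Function.uncurry K))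
    (hKsymm : ∀ x y, K x y = K y x) {C γ p t : ℝ} (hC : 0 < C)
    (hKS : ∀ y S, ENNReal.ofReal C * μ S ^ γ ≤ ∫⁻ x in S, K x y ∂μ) (hp0 : 0 < p) (hp1 : p < 1)
    (ht0 : 0 < t) (ht1 : t < 1) (hγ : γ = 1 / p + 1 / t - 1) :
    ∃ N : ℝ, 0 < N ∧ ∀ f g : X → ℝ, Measurable f → Measurable g →
      (∀ x, 0 ≤ f x) → (∀ x, 0 ≤ g x) →
      ENNReal.ofReal (N * (∫ x, |f x| ^ p ∂μ) ^ (1 / p) * (∫ x, |g x| ^ t ∂μ) ^ (1 / t)) ≤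
        ∫⁻ x, ∫⁻ y, ENNReal.ofReal (f x) * K x y * ENNReal.ofReal (g y) ∂μ ∂μ := by
  have h1p : 1 < 1 / p := by rw [lt_div_iff₀ hp0]; linarith
  have h1t : 1 < 1 / t := by rw [lt_div_iff₀ ht0]; linarith
  set θ := (1 / p - 1) / (γ - 1)
  have hθ0 : 0 ≤ θ := div_nonneg (by linarith) (by linarith)
  have hθ1 : θ ≤ 1 := by rw [div_le_one (by linarith)]; linarith
  have hθt : (1 / t - 1) / (γ - 1) = 1 - θ := by
    rw [eq_sub_iff_add_eq, ← add_div, div_eq_one_iff_eq (by linarith)]; linarith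
  obtain ⟨c₂, hc₂, hf_le⟩ := exists_pos_mul_lintegral_rpow_le hp0 hp1 (by linarith : 1 / p < γ)
  obtain ⟨c₃, hc₃, hg_le⟩ := exists_pos_mul_lintegral_rpow_le ht0 ht1 (by linarith : 1 / t < γ)
  simp only [hθt, show (1 : ℝ) - (1 - θ) = θ by ring] at hg_le
  refine ⟨C * c₂ * c₃, by positivity, fun f g hf hg hf0 hg0 => ?_⟩
  calc _ = ENNReal.ofReal C *
          (ENNReal.ofReal c₂ * ENNReal.ofReal ((∫ x, |f x| ^ p ∂μ) ^ (1 / p))) *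
          (ENNReal.ofReal c₃ * ENNReal.ofReal ((∫ x, |g x| ^ t ∂μ) ^ (1 / t))) := by
        rw [ofReal_mul (by positivity), ofReal_mul (by positivity), ofReal_mul (by positivity),
          ofReal_mul (by positivity)]
        ring
    _ ≤ ENNReal.ofReal C * ((∫⁻ s in Ioi 0, μ {x | s < f x} ^ γ) ^ θ *
          (∫⁻ x, ENNReal.ofReal (f x) ∂μ) ^ (1 - θ)) *
        ((∫⁻ s in Ioi 0, μ {x | s < g x} ^ γ) ^ (1 - θ) * (∫⁻ x, ENNReal.ofReal (g x) ∂μ) ^ θ) := by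
        gcongr ENNReal.ofReal C * ?_ * ?_
        · exact (mul_le_mul_right (ofReal_integral_abs_rpow_rpow_le μ hf0 hp0) _).trans
            (hf_le μ f hf hf0)
        · exact (mul_le_mul_right (ofReal_integral_abs_rpow_rpow_le μ hg0 ht0) _).trans
            (hg_le μ g hg hg0)
    _ ≤ _ := mul_rpow_mul_rpow_le hθ0 hθ1 (mul_lintegral_le_lintegral_lintegral hK hKS hf hg hf0)
        (mul_lintegral_le_lintegral_lintegral_of_symm hK hKsymm hKS hf hg hg0)

/-- **Reversed Hardy-Littlewood-Sobolev inequality** (Theorem 1.1):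
for `n ≥ 1`, `0 < p, t < 1` and `λ = n - α < 0` with `1/p + 1/t + λ/n = 2`,
there is a constant `N = N(n, α, p) > 0` such that for all nonnegative
`f ∈ L^p(ℝⁿ)` and `g ∈ L^t(ℝⁿ)`,
`∫∫ f(x) |x-y|^(α-n) g(y) dx dy ≥ N ‖f‖_{L^p} ‖g‖_{L^t}`. -/
theorem reversed_HLS_inequality (n : ℕ) (hn : 1 ≤ n) (p t α : ℝ)
    (hp0 : 0 < p) (hp1 : p < 1) (ht0 : 0 < t) (ht1 : t < 1)
    (hα : (n : ℝ) < α)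
    (hexp : 1 / p + 1 / t + ((n : ℝ) - α) / n = 2) :
    ∃ N : ℝ, 0 < N ∧
      ∀ f g : EuclideanSpace ℝ (Fin n) → ℝ,
        Measurable f → Measurable g →
        (∀ x, 0 ≤ f x) → (∀ x, 0 ≤ g x) →
        Integrable (fun x => |f x| ^ p) → Integrable (fun x => |g x| ^ t) →
        ENNReal.ofReal
            (N * (∫ x, |f x| ^ p) ^ (1 / p) * (∫ x, |g x| ^ t) ^ (1 / t)) ≤
          ∫⁻ x, ∫⁻ y, ENNReal.ofReal (f x * dist x y ^ (α - n) * g y) := by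
  have : NeZero n := ⟨by omega⟩
  obtain ⟨C, hC, hK⟩ := exists_pos_mul_measure_rpow_le_setLIntegral_dist_rpow
    (volume : Measure (EuclideanSpace ℝ (Fin n))) (sub_pos.2 hα)
  rw [finrank_euclideanSpace_fin] at hK
  obtain ⟨N, hN, hHLS⟩ := reversed_HLS_of_setLIntegral_kernel_ge (by fun_prop)
    (fun x y => by rw [dist_comm]) hC hK hp0 hp1 ht0 ht1 (by linear_combination -hexp)
  refine ⟨N, hN, fun f g hf hg hf0 hg0 _ _ => (hHLS f g hf hg hf0 hg0).trans_eq ?_⟩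
  refine lintegral_congr fun x => lintegral_congr fun y => ?_
  rw [ofReal_mul (by positivity [hf0 x]), ofReal_mul (hf0 x)]
end

section
/- Let 1 ≤ n < α, p = 2n/(n+α), q = 2n/(n−α). Let F ∈ L^1(𝕊ⁿ) be a nonnegative function with ‖F‖_{L^p(𝕊ⁿ)} = 1. Then for every ε > 0 there exists a nonnegative continuous function G on 𝕊ⁿ such that ‖F − G‖_{L^p(𝕊ⁿ)} + | ‖Ĩ_α F‖_{L^q(𝕊ⁿ)} − ‖Ĩ_α G‖_{L^q(𝕊ⁿ)} | < ε. -/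
open MeasureTheory ENNReal Metric

/-- The standard surface measure on the unit sphere `𝕊ⁿ ⊆ ℝ^(n+1)`. -/
noncomputable def sphereMeasure (n : ℕ) :
    Measure (sphere (0 : EuclideanSpace ℝ (Fin (n + 1))) 1) :=
  (volume : Measure (EuclideanSpace ℝ (Fin (n + 1)))).toSphere

/-- The singular integral operator `Ĩ_α F(ξ) = ∫_{𝕊ⁿ} F(η) |ξ-η|^(α-n) dη` on the sphere,
where `|ξ-η|` is the chordal distance in `ℝ^(n+1)`, valued in `ℝ≥0∞`. -/
noncomputable def sphereRiesz (n : ℕ) (α : ℝ)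
    (F : sphere (0 : EuclideanSpace ℝ (Fin (n + 1))) 1 → ℝ)
    (ξ : sphere (0 : EuclideanSpace ℝ (Fin (n + 1))) 1) : ℝ≥0∞ :=
  ∫⁻ η, ENNReal.ofReal (F η *
    dist (ξ : EuclideanSpace ℝ (Fin (n + 1))) (η : EuclideanSpace ℝ (Fin (n + 1))) ^ (α - n))
    ∂(sphereMeasure n)

/-!
Since `α > n`, the kernel `|ξ - η| ^ (α - n)` is continuous and bounded by `2 ^ (α - n)`, so
`Ĩ_α` is Lipschitz from `L¹` to the sup norm and `Ĩ_α F` is continuous. It is also positive,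
because the kernel vanishes only on the diagonal, which is null for `n ≥ 1`; by compactness it is
bounded below by some `m > 0`. Approximating `F` in `L¹` by continuous `G_k ≥ 0` thus gives
`Ĩ_α G_k → Ĩ_α F` uniformly with `Ĩ_α G_k ≥ m / 2` eventually, and dominated convergence handles
the negative exponent `q`. Since `p < 1`, Hölder's inequality on the finite measure space bounds
the `L^p` distance by the `L¹` distance.
-/

open Filter Topology

theorem ENNReal.rpow_le_rpow_of_nonpos {x y : ℝ≥0∞} {z : ℝ} (hxy : x ≤ y) (hz : z ≤ 0) :
    y ^ z ≤ x ^ z := by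
  obtain ⟨r, hr, rfl⟩ : ∃ r, 0 ≤ r ∧ z = -r := ⟨-z, by linarith, by ring⟩
  rw [ENNReal.rpow_neg, ENNReal.rpow_neg]
  exact ENNReal.inv_le_inv.2 (ENNReal.rpow_le_rpow hxy hr)

theorem ENNReal.tendsto_of_le_add_of_le_add {ι : Type*} {l : Filter ι} {a : ℝ≥0∞} (ha : a ≠ ⊤)
    {b e : ι → ℝ≥0∞} (he : Tendsto e l (𝓝 0)) (hab : ∀ i, a ≤ b i + e i)
    (hba : ∀ i, b i ≤ a + e i) : Tendsto b l (𝓝 a) := by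
  refine tendsto_of_tendsto_of_tendsto_of_le_of_le (g := fun i => a - e i)
    (h := fun i => a + e i) ?_ ?_ (fun i => tsub_le_iff_right.2 (hab i)) hba
  · simpa using ENNReal.Tendsto.sub tendsto_const_nhds he (Or.inl ha)
  · simpa using tendsto_const_nhds.add he

theorem ENNReal.tendsto_toReal_rpow_of_neg {ι : Type*} {l : Filter ι} {b : ι → ℝ≥0∞}
    {B : ℝ≥0∞} {r : ℝ} (hr : r < 0) (hB : B ≠ 0) (h : Tendsto b l (𝓝 B)) :
    Tendsto (fun i => (b i ^ r).toReal) l (𝓝 (B ^ r).toReal) :=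
  (ENNReal.tendsto_toReal (by simp [ENNReal.rpow_eq_top_iff, hB, hr.le.not_gt])).comp
    ((ENNReal.continuous_rpow_const.tendsto _).comp h)

section Lintegral

variable {X : Type*} [MeasurableSpace X] {μ : Measure X}

theorem tendsto_lintegral_rpow_of_nonpos [IsFiniteMeasure μ] {ι : Type*} {l : Filter ι}
    [l.IsCountablyGenerated] {f : ι → X → ℝ≥0∞} {g : X → ℝ≥0∞} {q : ℝ} (hq : q ≤ 0)
    {c : ℝ≥0∞} (hc : c ≠ 0) (hf : ∀ i, Measurable (f i)) (hfc : ∀ᶠ i in l, ∀ x, c ≤ f i x)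
    (hfg : ∀ x, Tendsto (fun i => f i x) l (𝓝 (g x))) :
    Tendsto (fun i => ∫⁻ x, f i x ^ q ∂μ) l (𝓝 (∫⁻ x, g x ^ q ∂μ)) := by
  refine tendsto_lintegral_filter_of_dominated_convergence (fun _ => c ^ q)
    (Eventually.of_forall fun i => (hf i).pow_const q) ?_ ?_
    (ae_of_all _ fun x => (ENNReal.continuous_rpow_const.tendsto _).comp (hfg x))
  · filter_upwards [hfc] with i hi
    exact ae_of_all _ fun x => ENNReal.rpow_le_rpow_of_nonpos (hi x) hq
  · rw [lintegral_const]
    refine ENNReal.mul_ne_top ?_ (measure_ne_top _ _)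
    simp [ENNReal.rpow_eq_top_iff, hc, hq.not_gt]

theorem lintegral_rpow_ne_zero_of_nonpos [NeZero μ] {f : X → ℝ≥0∞} {q : ℝ} (hq : q ≤ 0)
    (hf : Measurable f) (hfin : ∀ x, f x ≠ ⊤) : ∫⁻ x, f x ^ q ∂μ ≠ 0 := by
  rw [Ne, lintegral_eq_zero_iff (hf.pow_const q)]
  intro h
  obtain ⟨x, hx⟩ := h.exists
  simp [ENNReal.rpow_eq_zero_iff, hfin x, hq.not_gt] at hx

theorem integral_abs_rpow_rpow_eq_toReal_eLpNorm' {f : X → ℝ} {p : ℝ} (hp : 0 < p)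
    (hf : AEStronglyMeasurable f μ) :
    (∫ x, |f x| ^ p ∂μ) ^ (1 / p) = (eLpNorm' f p μ).toReal := by
  have hm : AEStronglyMeasurable (fun x => |f x| ^ p) μ :=
    (hf.aemeasurable.abs.pow_const p).aestronglyMeasurable
  rw [eLpNorm'_eq_lintegral_enorm, ← ENNReal.toReal_rpow,
    integral_eq_lintegral_of_nonneg_ae (ae_of_all _ fun x => by positivity) hm]
  congr 2
  refine lintegral_congr fun x => ?_
  rw [Real.enorm_eq_ofReal_abs, ENNReal.ofReal_rpow_of_nonneg (abs_nonneg _) hp.le]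

theorem tendsto_integral_abs_rpow_rpow_of_tendsto_eLpNorm_one [IsFiniteMeasure μ] {ι : Type*}
    {l : Filter ι} {f : ι → X → ℝ} {p : ℝ} (hp0 : 0 < p) (hp1 : p ≤ 1)
    (hf : ∀ i, AEStronglyMeasurable (f i) μ) (hlim : Tendsto (fun i => eLpNorm (f i) 1 μ) l (𝓝 0)) :
    Tendsto (fun i => (∫ x, |f i x| ^ p ∂μ) ^ (1 / p)) l (𝓝 0) := by
  simp only [integral_abs_rpow_rpow_eq_toReal_eLpNorm' hp0 (hf _)]
  rw [← ENNReal.toReal_zero]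
  refine (ENNReal.tendsto_toReal ENNReal.zero_ne_top).comp ?_
  have hC : μ Set.univ ^ (1 / p - 1) ≠ ⊤ :=
    ENNReal.rpow_ne_top_of_nonneg (by rw [sub_nonneg, le_div_iff₀ hp0]; linarith)
      (measure_ne_top _ _)
  refine tendsto_of_tendsto_of_tendsto_of_le_of_le tendsto_const_nhds
    (by simpa using ENNReal.Tendsto.mul_const hlim (Or.inr hC)) (fun _ => bot_le) fun i => ?_
  simpa [eLpNorm_eq_eLpNorm'] using eLpNorm'_le_eLpNorm'_mul_rpow_measure_univ hp0 hp1 (hf i)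

end Lintegral

theorem MeasureTheory.Integrable.exists_seq_continuous_nonneg_tendsto_eLpNorm_sub
    {X : Type*} [TopologicalSpace X] [NormalSpace X] [MeasurableSpace X] [BorelSpace X]
    {μ : Measure X} [μ.WeaklyRegular] {F : X → ℝ} (hF : Integrable F μ) (hFpos : ∀ x, 0 ≤ F x) :
    ∃ G : ℕ → X → ℝ, (∀ k, Continuous (G k)) ∧ (∀ k x, 0 ≤ G k x) ∧
      Tendsto (fun k => eLpNorm (F - G k) 1 μ) atTop (𝓝 0) := by
  choose g hg _ using fun k : ℕ =>
    hF.exists_boundedContinuous_lintegral_sub_le (ENNReal.inv_ne_zero.2 (natCast_ne_top k))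
  refine ⟨fun k x => max (g k x) 0, fun k => (g k).continuous.max continuous_const,
    fun k x => le_max_right _ _, tendsto_of_tendsto_of_tendsto_of_le_of_le tendsto_const_nhds
    ENNReal.tendsto_inv_nat_nhds_zero (fun _ => bot_le) fun k => ?_⟩
  refine le_trans (eLpNorm_mono fun x => ?_) (eLpNorm_one_eq_lintegral_enorm.trans_le (hg k))
  simpa [max_eq_left (hFpos x)] using abs_max_sub_max_le_abs (F x) (g k x) 0

theorem dist_le_two_of_mem_sphere {E : Type*} [SeminormedAddCommGroup E] {x y : E}
    (hx : x ∈ sphere 0 1) (hy : y ∈ sphere 0 1) : dist x y ≤ 2 := by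
  have := dist_le_norm_add_norm x y
  rw [mem_sphere_zero_iff_norm.1 hx, mem_sphere_zero_iff_norm.1 hy] at this
  linarith

section Sphere

variable {n : ℕ}

local notation "ℝ^" n:max => EuclideanSpace ℝ (Fin (n + 1))

local notation "𝕊" n:max => sphere (0 : ℝ^n) 1

instance : IsFiniteMeasure (sphereMeasure n) := by
  unfold sphereMeasure; infer_instance

instance : NeZero (sphereMeasure n) := ⟨Measure.toSphere_ne_zero _⟩

theorem sphereMeasure_singleton (hn : 1 ≤ n) (ξ : 𝕊 n) : sphereMeasure n {ξ} = 0 := by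
  rw [sphereMeasure, Measure.toSphere_apply' _ (measurableSet_singleton ξ)]
  have hξ : (ξ : ℝ^n) ≠ 0 := ne_zero_of_mem_unit_sphere ξ
  -- the cone over a point lies in a line, which is null once the ambient dimension is ≥ 2
  refine mul_eq_zero_of_right _ (measure_mono_null ?_ (Measure.addHaar_submodule volume
    (Submodule.span ℝ {(ξ : ℝ^n)}) fun h => ?_))
  · rintro y ⟨t, -, x, hx, rfl⟩
    rw [Set.image_singleton, Set.mem_singleton_iff] at hx
    exact hx ▸ Submodule.smul_mem _ t (Submodule.mem_span_singleton_self _)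
  · have := finrank_span_singleton (K := ℝ) hξ
    rw [h, finrank_top, finrank_euclideanSpace_fin] at this
    omega

variable {α : ℝ} {F G : 𝕊 n → ℝ}

theorem measurable_sphereRiesz (hF : Measurable F) : Measurable (sphereRiesz n α F) :=
  Measurable.lintegral_prod_right (by fun_prop)

theorem ofReal_mul_dist_rpow_le (hα : (n : ℝ) ≤ α) (a b : ℝ) (ξ η : 𝕊 n) :
    ENNReal.ofReal (a * dist (ξ : ℝ^n) (η : ℝ^n) ^ (α - n)) ≤
      ENNReal.ofReal (b * dist (ξ : ℝ^n) (η : ℝ^n) ^ (α - n)) +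
        ENNReal.ofReal (2 ^ (α - n)) * ‖a - b‖ₑ := by
  set d := dist (ξ : ℝ^n) (η : ℝ^n)
  have hd0 : 0 ≤ d ^ (α - n) := by positivity
  have hd2 : d ^ (α - n) ≤ 2 ^ (α - n) :=
    Real.rpow_le_rpow dist_nonneg (dist_le_two_of_mem_sphere ξ.2 η.2) (sub_nonneg.2 hα)
  have key : a * d ^ (α - n) ≤ b * d ^ (α - n) + 2 ^ (α - n) * |a - b| := by
    nlinarith [mul_le_mul_of_nonneg_right (le_abs_self (a - b)) hd0,
      mul_le_mul_of_nonneg_left hd2 (abs_nonneg (a - b))]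
  rw [Real.enorm_eq_ofReal_abs, ← ENNReal.ofReal_mul (by positivity)]
  exact (ENNReal.ofReal_le_ofReal key).trans ENNReal.ofReal_add_le

theorem sphereRiesz_le_add (hα : (n : ℝ) ≤ α) (hG : Measurable G) (ξ : 𝕊 n) :
    sphereRiesz n α F ξ ≤ sphereRiesz n α G ξ +
      ENNReal.ofReal (2 ^ (α - n)) * eLpNorm (F - G) 1 (sphereMeasure n) := by
  rw [eLpNorm_one_eq_lintegral_enorm, ← lintegral_const_mul' _ _ ENNReal.ofReal_ne_top,
    sphereRiesz, sphereRiesz, ← lintegral_add_left (by fun_prop)]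
  exact lintegral_mono fun η => ofReal_mul_dist_rpow_le hα (F η) (G η) ξ η

theorem sphereRiesz_le (hα : (n : ℝ) ≤ α) (ξ : 𝕊 n) :
    sphereRiesz n α F ξ ≤ ENNReal.ofReal (2 ^ (α - n)) * eLpNorm F 1 (sphereMeasure n) := by
  simpa [sphereRiesz] using sphereRiesz_le_add (F := F) hα measurable_zero ξ

theorem sphereRiesz_ne_top (hα : (n : ℝ) ≤ α) (hF : Integrable F (sphereMeasure n)) (ξ : 𝕊 n) :
    sphereRiesz n α F ξ ≠ ⊤ :=
  ne_top_of_le_ne_top (ENNReal.mul_ne_top ENNReal.ofReal_ne_top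
    (memLp_one_iff_integrable.2 hF).eLpNorm_ne_top) (sphereRiesz_le hα ξ)

theorem continuous_sphereRiesz (hα : (n : ℝ) ≤ α) (hF : Measurable F)
    (hFi : Integrable F (sphereMeasure n)) : Continuous (sphereRiesz n α F) := by
  refine continuous_iff_continuousAt.2 fun ξ => tendsto_lintegral_filter_of_dominated_convergence
    (fun η => ENNReal.ofReal (2 ^ (α - n)) * ‖F η‖ₑ) (Eventually.of_forall fun _ => by fun_prop)
    (Eventually.of_forall fun ξ' => ae_of_all _ fun η => ?_) ?_ (ae_of_all _ fun η => ?_)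
  · simpa using ofReal_mul_dist_rpow_le hα (F η) 0 ξ' η
  · rw [lintegral_const_mul' _ _ ENNReal.ofReal_ne_top, ← eLpNorm_one_eq_lintegral_enorm]
    exact ENNReal.mul_ne_top ENNReal.ofReal_ne_top (memLp_one_iff_integrable.2 hFi).eLpNorm_ne_top
  · exact (ENNReal.continuous_ofReal.comp (continuous_const.mul
      ((continuous_subtype_val.dist continuous_const).rpow_const
        fun _ => Or.inr (sub_nonneg.2 hα)))).tendsto ξ

theorem sphereRiesz_pos (hn : 1 ≤ n) (hF : Measurable F) (hFpos : ∀ η, 0 ≤ F η)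
    (hFne : ¬ F =ᵐ[sphereMeasure n] 0) (ξ : 𝕊 n) : 0 < sphereRiesz n α F ξ := by
  refine pos_iff_ne_zero.2 fun h0 => hFne ?_
  rw [sphereRiesz, lintegral_eq_zero_iff (by fun_prop)] at h0
  have hne : ∀ᵐ η ∂(sphereMeasure n), η ≠ ξ := by
    simpa [ae_iff] using sphereMeasure_singleton hn ξ
  filter_upwards [h0, hne] with η hη hηξ
  have hd : 0 < dist (ξ : ℝ^n) (η : ℝ^n) ^ (α - n) :=
    Real.rpow_pos_of_pos (dist_pos.2 fun h => hηξ (Subtype.ext h).symm) _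
  have : F η * dist (ξ : ℝ^n) (η : ℝ^n) ^ (α - n) ≤ 0 := by simpa using hη
  exact le_antisymm (nonpos_of_mul_nonpos_left this hd) (hFpos η)

theorem exists_pos_le_sphereRiesz (hn : 1 ≤ n) (hα : (n : ℝ) ≤ α) (hF : Measurable F)
    (hFi : Integrable F (sphereMeasure n)) (hFpos : ∀ η, 0 ≤ F η)
    (hFne : ¬ F =ᵐ[sphereMeasure n] 0) :
    ∃ m, 0 < m ∧ m ≠ ⊤ ∧ ∀ ξ, m ≤ sphereRiesz n α F ξ := by
  obtain ⟨ξ₀, -, hξ₀⟩ := isCompact_univ.exists_isMinOn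
    (@Set.univ_nonempty _ (NormedSpace.sphere_nonempty.2 zero_le_one).to_subtype)
    (continuous_sphereRiesz hα hF hFi).continuousOn
  exact ⟨_, sphereRiesz_pos hn hF hFpos hFne ξ₀, sphereRiesz_ne_top hα hFi ξ₀,
    fun ξ => hξ₀ (Set.mem_univ ξ)⟩

theorem tendsto_lintegral_sphereRiesz_rpow (hn : 1 ≤ n) (hα : (n : ℝ) ≤ α) {q : ℝ} (hq : q ≤ 0)
    (hF : Measurable F) (hFi : Integrable F (sphereMeasure n)) (hFpos : ∀ η, 0 ≤ F η)
    (hFne : ¬ F =ᵐ[sphereMeasure n] 0) {G : ℕ → 𝕊 n → ℝ} (hG : ∀ k, Measurable (G k))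
    (hFG : Tendsto (fun k => eLpNorm (F - G k) 1 (sphereMeasure n)) atTop (𝓝 0)) :
    Tendsto (fun k => ∫⁻ ξ, sphereRiesz n α (G k) ξ ^ q ∂(sphereMeasure n)) atTop
      (𝓝 (∫⁻ ξ, sphereRiesz n α F ξ ^ q ∂(sphereMeasure n))) := by
  obtain ⟨m, hm0, hmtop, hm⟩ := exists_pos_le_sphereRiesz hn hα hF hFi hFpos hFne
  set e := fun k => ENNReal.ofReal (2 ^ (α - n)) * eLpNorm (F - G k) 1 (sphereMeasure n)
  have he : Tendsto e atTop (𝓝 0) := by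
    simpa using ENNReal.Tendsto.const_mul hFG (Or.inr ENNReal.ofReal_ne_top)
  have hFG_le : ∀ k ξ, sphereRiesz n α F ξ ≤ sphereRiesz n α (G k) ξ + e k :=
    fun k => sphereRiesz_le_add hα (hG k)
  have hGF_le : ∀ k ξ, sphereRiesz n α (G k) ξ ≤ sphereRiesz n α F ξ + e k := fun k ξ => by
    simpa only [e, eLpNorm_sub_comm] using sphereRiesz_le_add hα hF ξ
  refine tendsto_lintegral_rpow_of_nonpos hq (ENNReal.half_pos hm0.ne').ne'
    (fun k => measurable_sphereRiesz (hG k)) ?_ fun ξ =>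
      ENNReal.tendsto_of_le_add_of_le_add (sphereRiesz_ne_top hα hFi ξ) he
        (hFG_le · ξ) (hGF_le · ξ)
  filter_upwards [he.eventually (ge_mem_nhds (ENNReal.half_pos hm0.ne'))] with k hk ξ
  calc m / 2 = m - m / 2 := (ENNReal.sub_half hmtop).symm
    _ ≤ sphereRiesz n α F ξ - e k := tsub_le_tsub (hm ξ) hk
    _ ≤ sphereRiesz n α (G k) ξ := tsub_le_iff_right.2 (hFG_le k ξ)

end Sphere

/-- **Density Lemma** (Lemma 3.1): for `1 ≤ n < α`, `p = 2n/(n+α)`, `q = 2n/(n-α)`,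
a nonnegative `F ∈ L^1(𝕊ⁿ)` with `‖F‖_{L^p(𝕊ⁿ)} = 1`, and any `ε > 0`, there is a
nonnegative continuous `G` on `𝕊ⁿ` with
`‖F - G‖_{L^p(𝕊ⁿ)} + | ‖Ĩ_α F‖_{L^q(𝕊ⁿ)} - ‖Ĩ_α G‖_{L^q(𝕊ⁿ)} | < ε`. -/
theorem density_lemma_sphere (n : ℕ) (hn : 1 ≤ n) (α p q : ℝ)
    (hα : (n : ℝ) < α)
    (hp : p = 2 * n / ((n : ℝ) + α)) (hq : q = 2 * n / ((n : ℝ) - α))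
    (F : sphere (0 : EuclideanSpace ℝ (Fin (n + 1))) 1 → ℝ)
    (hF : Measurable F) (hFpos : ∀ ξ, 0 ≤ F ξ)
    (hFL1 : Integrable F (sphereMeasure n))
    (hFnorm : (∫ ξ, |F ξ| ^ p ∂(sphereMeasure n)) ^ (1 / p) = 1)
    (ε : ℝ) (hε : 0 < ε) :
    ∃ G : sphere (0 : EuclideanSpace ℝ (Fin (n + 1))) 1 → ℝ,
      Continuous G ∧ (∀ ξ, 0 ≤ G ξ) ∧
      (∫ ξ, |F ξ - G ξ| ^ p ∂(sphereMeasure n)) ^ (1 / p) +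
          |((∫⁻ ξ, (sphereRiesz n α F ξ) ^ q ∂(sphereMeasure n)) ^ (1 / q)).toReal -
            ((∫⁻ ξ, (sphereRiesz n α G ξ) ^ q ∂(sphereMeasure n)) ^ (1 / q)).toReal| < ε := by
  have hn' : (1 : ℝ) ≤ n := Nat.one_le_cast.2 hn
  have hp0 : 0 < p := by rw [hp]; apply div_pos <;> linarith
  have hp1 : p ≤ 1 := by rw [hp, div_le_one (by linarith)]; linarith
  have hq0 : q < 0 := by rw [hq]; apply div_neg_of_pos_of_neg <;> linarith
  have hFne : ¬ F =ᵐ[sphereMeasure n] 0 := fun h0 => by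
    have : (fun ξ => |F ξ| ^ p) =ᵐ[sphereMeasure n] 0 := by
      filter_upwards [h0] with ξ hξ
      simp [hξ, Real.zero_rpow hp0.ne']
    rw [integral_congr_ae this] at hFnorm
    simp [Real.zero_rpow (inv_pos.2 hp0).ne'] at hFnorm
  obtain ⟨G, hGc, hGpos, hFG⟩ := hFL1.exists_seq_continuous_nonneg_tendsto_eLpNorm_sub hFpos
  have hLp := tendsto_integral_abs_rpow_rpow_of_tendsto_eLpNorm_one hp0 hp1
    (fun k => (hF.sub (hGc k).measurable).aestronglyMeasurable) hFG
  have hLq := ENNReal.tendsto_toReal_rpow_of_neg (one_div_neg.2 hq0)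
    (lintegral_rpow_ne_zero_of_nonpos hq0.le (measurable_sphereRiesz hF)
      (sphereRiesz_ne_top hα.le hFL1))
    (tendsto_lintegral_sphereRiesz_rpow hn hα.le hq0.le hF hFL1 hFpos hFne
      (fun k => (hGc k).measurable) hFG)
  have hsum := hLp.add (tendsto_sub_nhds_zero_iff.2 hLq).abs
  rw [abs_zero, add_zero] at hsum
  obtain ⟨k, hk⟩ := (hsum.eventually (gt_mem_nhds hε)).exists
  exact ⟨G k, hGc k, hGpos k, by rwa [abs_sub_comm]⟩
end

section
/- Let 1 ≤ n < α and θ, κ < 0. Suppose (u, v) is a pair of positive Lebesgue measurable functions on ℝⁿ, not identically +∞, satisfying u(y) = ∫_{ℝⁿ}|x−y|^{α−n} v(x)^κ dx for all y ∈ ℝⁿ and v(x) = ∫_{ℝⁿ}|x−y|^{α−n} u(y)^θ dy for all x ∈ ℝⁿ. Then: (i) ∫_{ℝⁿ}(1+|y|^{α−n}) u(y)^θ dy < ∞ and ∫_{ℝⁿ}(1+|x|^{α−n}) v(x)^κ dx < ∞; (ii) lim_{|y|→∞} |y|^{n−α} u(y) = ∫_{ℝⁿ} v(x)^κ dx < ∞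 and lim_{|x|→∞} |x|^{n−α} v(x) = ∫_{ℝⁿ} u(y)^θ dy < ∞; (iii) there exist constants C₁, C₂ > 0 such that (1+|y|^{α−n})/C₁ ≤ u(y) ≤ C₁(1+|y|^{α−n}) for all y ∈ ℝⁿ and (1+|x|^{α−n})/C₂ ≤ v(x) ≤ C₂(1+|x|^{α−n}) for all x ∈ ℝⁿ. -/
open MeasureTheory ENNReal Filter Metric

private lemma rpow_add_le' {p a b : ℝ} (hp : 0 ≤ p) (ha : 0 ≤ a) (hb : 0 ≤ b) :
    (a + b) ^ p ≤ 2 ^ p * (a ^ p + b ^ p) := by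
  have hm : a + b ≤ 2 * max a b := by
    rcases le_total a b with h | h
    · rw [max_eq_right h]; linarith
    · rw [max_eq_left h]; linarith
  have h0 : (0:ℝ) ≤ max a b := le_max_of_le_left ha
  calc (a + b) ^ p ≤ (2 * max a b) ^ p :=
        Real.rpow_le_rpow (by positivity) hm hp
    _ = 2 ^ p * (max a b) ^ p := Real.mul_rpow (by norm_num) h0
    _ ≤ 2 ^ p * (a ^ p + b ^ p) := by
        have hmax : (max a b) ^ p ≤ a ^ p + b ^ p := by
          rcases le_total a b with h | h
          · rw [max_eq_right h]
            have := Real.rpow_nonneg ha p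
            linarith
          · rw [max_eq_left h]
            have := Real.rpow_nonneg hb p
            linarith
        have h2 : (0:ℝ) ≤ 2 ^ p := Real.rpow_nonneg (by norm_num) p
        nlinarith

set_option maxHeartbeats 800000 in
private lemma master (n : ℕ) (hn : 1 ≤ n) (α : ℝ) (hα : (n : ℝ) < α)
    (w g : EuclideanSpace ℝ (Fin n) → ℝ)
    (hw : Measurable w) (hg : Measurable g)
    (hwpos : ∀ y, 0 < w y) (hgpos : ∀ x, 0 < g x)
    (heq : ∀ y, ENNReal.ofReal (w y) =
      ∫⁻ x, ENNReal.ofReal (dist x y ^ (α - n) * g x)) :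
    Integrable (fun x => (1 + ‖x‖ ^ (α - n)) * g x) ∧
    Integrable g ∧
    Tendsto (fun y : EuclideanSpace ℝ (Fin n) => ‖y‖ ^ ((n : ℝ) - α) * w y)
      (comap norm atTop) (nhds (∫ x, g x)) ∧
    ∃ C : ℝ, 0 < C ∧ ∀ y, (1 + ‖y‖ ^ (α - n)) / C ≤ w y ∧ w y ≤ C * (1 + ‖y‖ ^ (α - n)) := by
  haveI : NeZero n := ⟨by omega⟩
  set p : ℝ := α - n with hpdef
  have hp : 0 < p := by simp only [hpdef]; linarith
  have hgnn : ∀ x, 0 ≤ g x := fun x => (hgpos x).le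
  -- measurability of the kernel integrand
  have hfm : ∀ y : EuclideanSpace ℝ (Fin n),
      Measurable (fun x => dist x y ^ p * g x) := by
    intro y
    apply Measurable.mul _ hg
    have hd : Measurable (fun x : EuclideanSpace ℝ (Fin n) => dist x y) :=
      (continuous_id.dist continuous_const).measurable
    measurability
  have hfnn : ∀ y x, 0 ≤ dist x y ^ p * g x := fun y x =>
    mul_nonneg (Real.rpow_nonneg dist_nonneg p) (hgnn x)
  -- integrability of the kernel integrand
  have hfint : ∀ y, Integrable (fun x => dist x y ^ p * g x) := by
    intro y
    refine ⟨(hfm y).aestronglyMeasurable, ?_⟩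
    rw [hasFiniteIntegral_iff_ofReal (ae_of_all _ (hfnn y)), ← heq y]
    exact ofReal_lt_top
  -- the real-integral form of the equation
  have hfeq : ∀ y, w y = ∫ x, dist x y ^ p * g x := by
    intro y
    have h := integral_eq_lintegral_of_nonneg_ae (μ := volume) (ae_of_all _ (hfnn y))
      (hfm y).aestronglyMeasurable
    rw [← heq y, ENNReal.toReal_ofReal (hwpos y).le] at h
    exact h.symm
  -- points of norm 2 and norm 4
  obtain ⟨i⟩ : Nonempty (Fin n) := ⟨⟨0, by omega⟩⟩
  set q : EuclideanSpace ℝ (Fin n) := EuclideanSpace.single i (2:ℝ) with hqdef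
  have hqnorm : ‖q‖ = 2 := by
    rw [hqdef, EuclideanSpace.norm_single]; norm_num
  set q4 : EuclideanSpace ℝ (Fin n) := EuclideanSpace.single i (4:ℝ) with hq4def
  have hq4norm : ‖q4‖ = 4 := by
    rw [hq4def, EuclideanSpace.norm_single]; norm_num
  -- main integrability (Fact D)
  have hmeas1 : Measurable (fun x : EuclideanSpace ℝ (Fin n) => (1 + ‖x‖ ^ p) * g x) := by
    apply Measurable.mul _ hg
    have hd : Measurable (fun x : EuclideanSpace ℝ (Fin n) => ‖x‖) := measurable_norm
    measurability
  have key : Integrable (fun x : EuclideanSpace ℝ (Fin n) => (1 + ‖x‖ ^ p) * g x) := by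
    have hbd : ∀ x : EuclideanSpace ℝ (Fin n),
        (1 + ‖x‖ ^ p) * g x ≤ (2 + 2 ^ p) * (dist x 0 ^ p * g x + dist x q ^ p * g x) := by
      intro x
      rw [show (2 + 2 ^ p) * (dist x 0 ^ p * g x + dist x q ^ p * g x)
        = ((2 + 2 ^ p) * (dist x 0 ^ p + dist x q ^ p)) * g x by ring]
      apply mul_le_mul_of_nonneg_right _ (hgnn x)
      have h2p : (1:ℝ) ≤ 2 ^ p := Real.one_le_rpow (by norm_num) hp.le
      have hnn0 : (0:ℝ) ≤ dist x 0 ^ p := Real.rpow_nonneg dist_nonneg p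
      have hnnq : (0:ℝ) ≤ dist x q ^ p := Real.rpow_nonneg dist_nonneg p
      rcases le_total (‖x‖) 2 with hx | hx
      · have hsum : (1:ℝ) ≤ dist x 0 ^ p + dist x q ^ p := by
          have htri : (2:ℝ) ≤ dist x 0 + dist x q := by
            have h := dist_triangle (0:EuclideanSpace ℝ (Fin n)) x q
            rw [dist_comm (0:EuclideanSpace ℝ (Fin n)) x] at h
            calc (2:ℝ) = dist (0:EuclideanSpace ℝ (Fin n)) q := by
                  rw [dist_comm, dist_zero_right, hqnorm]
              _ ≤ dist x 0 + dist x q := h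
          rcases le_total 1 (dist x 0) with h1 | h1
          · have := Real.one_le_rpow h1 hp.le
            linarith
          · have h1q : (1:ℝ) ≤ dist x q := by linarith
            have := Real.one_le_rpow h1q hp.le
            linarith
        have hxp : ‖x‖ ^ p ≤ 2 ^ p := Real.rpow_le_rpow (norm_nonneg x) hx hp.le
        nlinarith
      · have hd0 : dist x 0 = ‖x‖ := dist_zero_right x
        have h1x : (1:ℝ) ≤ ‖x‖ ^ p := Real.one_le_rpow (by linarith) hp.le
        rw [hd0]
        nlinarith
    refine Integrable.mono (((hfint 0).add (hfint q)).const_mul (2 + 2 ^ p))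
      hmeas1.aestronglyMeasurable (ae_of_all _ fun x => ?_)
    have hxp : (0:ℝ) ≤ ‖x‖ ^ p := Real.rpow_nonneg (norm_nonneg x) p
    have hgx := hgnn x
    have hL : 0 ≤ (1 + ‖x‖ ^ p) * g x := by positivity
    have hR : 0 ≤ (2 + 2 ^ p) * (dist x 0 ^ p * g x + dist x q ^ p * g x) := by
      have h0 := hfnn 0 x
      have hq := hfnn q x
      positivity
    simp only [Pi.add_apply]
    rw [Real.norm_of_nonneg hL, Real.norm_of_nonneg hR]
    exact hbd x
  -- integrability of g
  have hgint : Integrable g := by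
    refine Integrable.mono key hg.aestronglyMeasurable (ae_of_all _ fun x => ?_)
    have hxp : (0:ℝ) ≤ ‖x‖ ^ p := Real.rpow_nonneg (norm_nonneg x) p
    have hgx := hgnn x
    rw [Real.norm_of_nonneg hgx, Real.norm_of_nonneg (by positivity)]
    nlinarith
  refine ⟨key, hgint, ?_, ?_⟩
  · -- the limit
    set l : Filter (EuclideanSpace ℝ (Fin n)) := comap norm atTop with hldef
    have hnt : Tendsto (norm : EuclideanSpace ℝ (Fin n) → ℝ) l atTop := tendsto_comap
    have hbig : ∀ r : ℝ, ∀ᶠ y in l, r ≤ ‖y‖ := fun r =>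
      hnt.eventually (eventually_ge_atTop r)
    set F : EuclideanSpace ℝ (Fin n) → EuclideanSpace ℝ (Fin n) → ℝ :=
      fun y x => ‖y‖ ^ ((n:ℝ) - α) * (dist x y ^ p * g x) with hFdef
    have hkey_eq : ∀ y, ‖y‖ ^ ((n:ℝ) - α) * w y = ∫ x, F y x := by
      intro y
      rw [hfeq y, ← integral_const_mul]
    have hrw : ∀ (y : EuclideanSpace ℝ (Fin n)), 0 < ‖y‖ → ∀ x,
        F y x = (dist x y / ‖y‖) ^ p * g x := by
      intro y hy x
      have h1 : ((n:ℝ) - α) = -p := by rw [hpdef]; ring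
      rw [hFdef]
      simp only
      rw [h1, Real.rpow_neg (norm_nonneg y), Real.div_rpow dist_nonneg (norm_nonneg y)]
      ring
    have hmain : Tendsto (fun y => ∫ x, F y x) l (nhds (∫ x, g x)) := by
      apply tendsto_integral_filter_of_dominated_convergence
        (fun x => 2 ^ p * ((1 + ‖x‖ ^ p) * g x))
      · exact Eventually.of_forall fun y =>
          (((measurable_const).mul (hfm y))).aestronglyMeasurable
      · filter_upwards [hbig 1] with y hy
        apply ae_of_all
        intro x
        have hy0 : 0 < ‖y‖ := by linarith
        rw [hrw y hy0 x]
        have hnn : 0 ≤ (dist x y / ‖y‖) ^ p * g x :=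
          mul_nonneg (Real.rpow_nonneg (by positivity) p) (hgnn x)
        rw [Real.norm_of_nonneg hnn]
        have hdd : dist x y / ‖y‖ ≤ 1 + ‖x‖ := by
          have h1 : dist x y ≤ ‖x‖ + ‖y‖ := by
            calc dist x y ≤ dist x 0 + dist 0 y := dist_triangle x 0 y
              _ = ‖x‖ + ‖y‖ := by rw [dist_zero_right, dist_comm, dist_zero_right]
          rw [div_le_iff₀ hy0]
          nlinarith [norm_nonneg x]
        have h2 : (dist x y / ‖y‖) ^ p ≤ (1 + ‖x‖) ^ p :=
          Real.rpow_le_rpow (by positivity) hdd hp.le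
        have h3 : (1 + ‖x‖) ^ p ≤ 2 ^ p * (1 ^ p + ‖x‖ ^ p) :=
          rpow_add_le' hp.le (by norm_num) (norm_nonneg x)
        rw [Real.one_rpow] at h3
        calc (dist x y / ‖y‖) ^ p * g x ≤ (2 ^ p * (1 + ‖x‖ ^ p)) * g x :=
              mul_le_mul_of_nonneg_right (h2.trans h3) (hgnn x)
          _ = 2 ^ p * ((1 + ‖x‖ ^ p) * g x) := by ring
      · exact key.const_mul _
      · apply ae_of_all
        intro x
        have hratio : Tendsto (fun y : EuclideanSpace ℝ (Fin n) => dist x y / ‖y‖) l (nhds 1) := by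
          have h0 : Tendsto (fun y : EuclideanSpace ℝ (Fin n) => ‖x‖ / ‖y‖) l (nhds 0) := by
            have := (tendsto_inv_atTop_zero).comp hnt
            have h := this.const_mul (‖x‖)
            simpa [div_eq_mul_inv, Function.comp] using h
          have hlow : Tendsto (fun y : EuclideanSpace ℝ (Fin n) => 1 - ‖x‖ / ‖y‖) l (nhds 1) := by
            have := ((tendsto_const_nhds : Tendsto _ l (nhds (1:ℝ)))).sub h0
            simpa using this
          have hup : Tendsto (fun y : EuclideanSpace ℝ (Fin n) => 1 + ‖x‖ / ‖y‖) l (nhds 1) := by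
            have := ((tendsto_const_nhds : Tendsto _ l (nhds (1:ℝ)))).add h0
            simpa using this
          apply tendsto_of_tendsto_of_tendsto_of_le_of_le' hlow hup
          · filter_upwards [hbig 1] with y hy
            have hy0 : 0 < ‖y‖ := by linarith
            have h1 : ‖y‖ - ‖x‖ ≤ dist x y := by
              have := norm_sub_norm_le y x
              rw [← dist_eq_norm, dist_comm] at this
              linarith
            calc 1 - ‖x‖ / ‖y‖ = (‖y‖ - ‖x‖) / ‖y‖ := by rw [sub_div, div_self hy0.ne']
              _ ≤ dist x y / ‖y‖ := by gcongr
          · filter_upwards [hbig 1] with y hy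
            have hy0 : 0 < ‖y‖ := by linarith
            have h1 : dist x y ≤ ‖x‖ + ‖y‖ := by
              calc dist x y ≤ dist x 0 + dist 0 y := dist_triangle x 0 y
                _ = ‖x‖ + ‖y‖ := by rw [dist_zero_right, dist_comm, dist_zero_right]
            calc dist x y / ‖y‖ ≤ (‖x‖ + ‖y‖) / ‖y‖ := by gcongr
              _ = 1 + ‖x‖ / ‖y‖ := by rw [add_div, div_self hy0.ne']; ring
        have hpow : Tendsto (fun y : EuclideanSpace ℝ (Fin n) => (dist x y / ‖y‖) ^ p) l (nhds 1) := by
          have := hratio.rpow_const (p := p) (Or.inl one_ne_zero)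
          simpa using this
        have := hpow.mul_const (g x)
        rw [one_mul] at this
        apply Tendsto.congr' _ this
        filter_upwards [hbig 1] with y hy
        exact (hrw y (by linarith) _).symm
    exact Tendsto.congr (fun y => (hkey_eq y).symm) hmain
  · -- the two-sided bounds
    -- lower-bound constants
    have hI2pos : 0 < ∫ x in closedBall (0:EuclideanSpace ℝ (Fin n)) 1, g x := by
      rw [setIntegral_pos_iff_support_of_nonneg_ae (ae_of_all _ (fun x => hgnn x))
        hgint.integrableOn]
      have hsupp : Function.support g = Set.univ := by
        ext x; simp [Function.support, (hgpos x).ne']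
      rw [hsupp, Set.univ_inter]
      exact measure_closedBall_pos volume _ one_pos
    have hI1pos : 0 < ∫ x in (ball (0:EuclideanSpace ℝ (Fin n)) 3)ᶜ, g x := by
      rw [setIntegral_pos_iff_support_of_nonneg_ae (ae_of_all _ (fun x => hgnn x))
        hgint.integrableOn]
      have hsupp : Function.support g = Set.univ := by
        ext x; simp [Function.support, (hgpos x).ne']
      rw [hsupp, Set.univ_inter]
      refine lt_of_lt_of_le (measure_closedBall_pos volume q4 one_pos) (measure_mono ?_)
      intro x hx
      simp only [Metric.mem_closedBall] at hx
      simp only [Set.mem_compl_iff, Metric.mem_ball, not_lt, dist_zero_right]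
      calc (3:ℝ) = ‖q4‖ - 1 := by rw [hq4norm]; norm_num
        _ ≤ ‖x‖ := by
          have h := norm_sub_norm_le q4 x
          rw [← dist_eq_norm, dist_comm] at h
          linarith
    set I2 := ∫ x in closedBall (0:EuclideanSpace ℝ (Fin n)) 1, g x with hI2def
    set I1 := ∫ x in (ball (0:EuclideanSpace ℝ (Fin n)) 3)ᶜ, g x with hI1def
    set K := ∫ x, (1 + ‖x‖ ^ p) * g x with hKdef
    -- upper bound
    have hup : ∀ y, w y ≤ (2 ^ p * K) * (1 + ‖y‖ ^ p) := by
      intro y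
      rw [hfeq y]
      have hptw : ∀ x, dist x y ^ p * g x ≤ (2 ^ p * (1 + ‖y‖ ^ p)) * ((1 + ‖x‖ ^ p) * g x) := by
        intro x
        have h1 : dist x y ≤ ‖x‖ + ‖y‖ := by
          calc dist x y ≤ dist x 0 + dist 0 y := dist_triangle x 0 y
            _ = ‖x‖ + ‖y‖ := by rw [dist_zero_right, dist_comm, dist_zero_right]
        have h2 : dist x y ^ p ≤ (‖x‖ + ‖y‖) ^ p :=
          Real.rpow_le_rpow dist_nonneg h1 hp.le
        have h3 : (‖x‖ + ‖y‖) ^ p ≤ 2 ^ p * (‖x‖ ^ p + ‖y‖ ^ p) :=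
          rpow_add_le' hp.le (norm_nonneg x) (norm_nonneg y)
        have hxp : (0:ℝ) ≤ ‖x‖ ^ p := Real.rpow_nonneg (norm_nonneg x) p
        have hyp : (0:ℝ) ≤ ‖y‖ ^ p := Real.rpow_nonneg (norm_nonneg y) p
        have h2pn : (0:ℝ) ≤ 2 ^ p := Real.rpow_nonneg (by norm_num) p
        have h4 : dist x y ^ p ≤ 2 ^ p * (1 + ‖y‖ ^ p) * (1 + ‖x‖ ^ p) := by
          have : ‖x‖ ^ p + ‖y‖ ^ p ≤ (1 + ‖y‖ ^ p) * (1 + ‖x‖ ^ p) := by nlinarith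
          nlinarith
        calc dist x y ^ p * g x ≤ (2 ^ p * (1 + ‖y‖ ^ p) * (1 + ‖x‖ ^ p)) * g x :=
              mul_le_mul_of_nonneg_right h4 (hgnn x)
          _ = (2 ^ p * (1 + ‖y‖ ^ p)) * ((1 + ‖x‖ ^ p) * g x) := by ring
      calc (∫ x, dist x y ^ p * g x)
          ≤ ∫ x, (2 ^ p * (1 + ‖y‖ ^ p)) * ((1 + ‖x‖ ^ p) * g x) :=
            integral_mono (hfint y) (key.const_mul _) hptw
        _ = (2 ^ p * (1 + ‖y‖ ^ p)) * K := by rw [integral_const_mul]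
        _ = (2 ^ p * K) * (1 + ‖y‖ ^ p) := by ring
    -- lower bound
    set cL : ℝ := min (I1 / (1 + 2 ^ p)) (I2 / (2 * 2 ^ p)) with hcLdef
    have h2pp : (0:ℝ) < 2 ^ p := Real.rpow_pos_of_pos (by norm_num) p
    have hcL : 0 < cL := lt_min (by positivity) (by positivity)
    have hlow : ∀ y, cL * (1 + ‖y‖ ^ p) ≤ w y := by
      intro y
      have hyp : (0:ℝ) ≤ ‖y‖ ^ p := Real.rpow_nonneg (norm_nonneg y) p
      rcases le_total (‖y‖) 2 with hy | hy
      · -- small y: use region outside ball 0 3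
        have hset : ∀ x ∈ (ball (0:EuclideanSpace ℝ (Fin n)) 3)ᶜ, g x ≤ dist x y ^ p * g x := by
          intro x hx
          simp only [Set.mem_compl_iff, Metric.mem_ball, not_lt, dist_zero_right] at hx
          have hd : (1:ℝ) ≤ dist x y := by
            have h := norm_sub_norm_le x y
            rw [← dist_eq_norm] at h
            linarith
          have := Real.one_le_rpow hd hp.le
          nlinarith [hgnn x]
        have h1 : I1 ≤ ∫ x in (ball (0:EuclideanSpace ℝ (Fin n)) 3)ᶜ, dist x y ^ p * g x := by
          apply setIntegral_mono_on hgint.integrableOn (hfint y).integrableOn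
            (measurableSet_ball.compl) hset
        have h2 : (∫ x in (ball (0:EuclideanSpace ℝ (Fin n)) 3)ᶜ, dist x y ^ p * g x) ≤ w y := by
          rw [hfeq y]
          exact setIntegral_le_integral (hfint y) (ae_of_all _ (hfnn y))
        have h3 : ‖y‖ ^ p ≤ 2 ^ p := Real.rpow_le_rpow (norm_nonneg y) hy hp.le
        have h4 : cL ≤ I1 / (1 + 2 ^ p) := min_le_left _ _
        have h5 : cL * (1 + ‖y‖ ^ p) ≤ (I1 / (1 + 2 ^ p)) * (1 + 2 ^ p) := by
          apply mul_le_mul h4 (by linarith) (by positivity) (by positivity)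
        rw [div_mul_cancel₀ _ (by positivity : (1:ℝ) + 2 ^ p ≠ 0)] at h5
        linarith
      · -- large y: use closed ball of radius 1
        have hset : ∀ x ∈ closedBall (0:EuclideanSpace ℝ (Fin n)) 1,
            (‖y‖ / 2) ^ p * g x ≤ dist x y ^ p * g x := by
          intro x hx
          simp only [Metric.mem_closedBall, dist_zero_right] at hx
          have hd : ‖y‖ / 2 ≤ dist x y := by
            have := norm_sub_norm_le y x
            rw [← dist_eq_norm, dist_comm] at this
            linarith
          have := Real.rpow_le_rpow (by positivity) hd hp.le
          nlinarith [hgnn x]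
        have h1 : (‖y‖ / 2) ^ p * I2 ≤
            ∫ x in closedBall (0:EuclideanSpace ℝ (Fin n)) 1, dist x y ^ p * g x := by
          rw [hI2def, ← integral_const_mul]
          exact setIntegral_mono_on (hgint.integrableOn.const_mul _) (hfint y).integrableOn
            measurableSet_closedBall hset
        have h2 : (∫ x in closedBall (0:EuclideanSpace ℝ (Fin n)) 1, dist x y ^ p * g x) ≤ w y := by
          rw [hfeq y]
          exact setIntegral_le_integral (hfint y) (ae_of_all _ (hfnn y))
        have hy1 : (1:ℝ) ≤ ‖y‖ := by linarith
        have h3 : (2:ℝ) ^ p ≤ ‖y‖ ^ p := Real.rpow_le_rpow (by norm_num) hy (le_of_lt hp)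
        have h4 : (1:ℝ) ≤ ‖y‖ ^ p := le_trans (Real.one_le_rpow (by norm_num) hp.le) h3
        have h5 : (‖y‖ / 2) ^ p = ‖y‖ ^ p / 2 ^ p := Real.div_rpow (norm_nonneg y) (by norm_num : (0:ℝ) ≤ 2) p
        have h6 : cL ≤ I2 / (2 * 2 ^ p) := min_le_right _ _
        have h7 : cL * (1 + ‖y‖ ^ p) ≤ (I2 / (2 * 2 ^ p)) * (2 * ‖y‖ ^ p) := by
          apply mul_le_mul h6 (by linarith) (by positivity) (by positivity)
        have h8 : (I2 / (2 * 2 ^ p)) * (2 * ‖y‖ ^ p) = (‖y‖ / 2) ^ p * I2 := by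
          rw [h5]; field_simp
        linarith [h7.trans_eq h8, h1, h2]
    -- assemble
    have h1cL : (0:ℝ) < 1 / cL := by positivity
    have hCpos : (0:ℝ) < max (2 ^ p * K) (1 / cL) + 1 := by
      have h2 := le_max_right (2 ^ p * K) (1 / cL)
      linarith
    refine ⟨max (2 ^ p * K) (1 / cL) + 1, hCpos, fun y => ?_⟩
    have hyp : (0:ℝ) ≤ ‖y‖ ^ p := Real.rpow_nonneg (norm_nonneg y) p
    constructor
    · have hinv : 1 / (max (2 ^ p * K) (1 / cL) + 1) ≤ cL := by
        rw [div_le_iff₀ hCpos]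
        have h1 : 1 / cL ≤ max (2 ^ p * K) (1 / cL) := le_max_right _ _
        have h2 : 1 / cL < max (2 ^ p * K) (1 / cL) + 1 := by linarith
        rw [div_lt_iff₀ hcL] at h2
        linarith
      calc (1 + ‖y‖ ^ p) / (max (2 ^ p * K) (1 / cL) + 1)
          = (1 + ‖y‖ ^ p) * (1 / (max (2 ^ p * K) (1 / cL) + 1)) := by ring
        _ ≤ (1 + ‖y‖ ^ p) * cL := mul_le_mul_of_nonneg_left hinv (by positivity)
        _ = cL * (1 + ‖y‖ ^ p) := by ring
        _ ≤ w y := hlow y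
    · calc w y ≤ (2 ^ p * K) * (1 + ‖y‖ ^ p) := hup y
        _ ≤ (max (2 ^ p * K) (1 / cL) + 1) * (1 + ‖y‖ ^ p) := by
            apply mul_le_mul_of_nonneg_right _ (by positivity)
            have := le_max_left (2 ^ p * K) (1 / cL)
            linarith

/-- **Asymptotic behavior of positive solutions of the integral system** (Lemma 3.4):
for `1 ≤ n < α` and `θ, κ < 0`, if `(u, v)` is a pair of positive measurable solutions of
`u(y) = ∫ |x-y|^(α-n) v(x)^κ dx`, `v(x) = ∫ |x-y|^(α-n) u(y)^θ dy`, then the weighted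
integrals `(1+|y|^(α-n)) u(y)^θ` and `(1+|x|^(α-n)) v(x)^κ` are integrable,
`|y|^(n-α) u(y) → ∫ v^κ < ∞` and `|x|^(n-α) v(x) → ∫ u^θ < ∞` as `|y|, |x| → ∞`, and
`u`, `v` are comparable to `1 + |·|^(α-n)` from above and below. -/
theorem integral_system_asymptotics (n : ℕ) (hn : 1 ≤ n) (α θ κ : ℝ)
    (hα : (n : ℝ) < α) (hθ : θ < 0) (hκ : κ < 0)
    (u v : EuclideanSpace ℝ (Fin n) → ℝ)
    (hu : Measurable u) (hv : Measurable v)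
    (hupos : ∀ y, 0 < u y) (hvpos : ∀ x, 0 < v x)
    (hueq : ∀ y, ENNReal.ofReal (u y) =
      ∫⁻ x, ENNReal.ofReal (dist x y ^ (α - n) * v x ^ κ))
    (hveq : ∀ x, ENNReal.ofReal (v x) =
      ∫⁻ y, ENNReal.ofReal (dist x y ^ (α - n) * u y ^ θ)) :
    -- (i)
    (Integrable (fun y : EuclideanSpace ℝ (Fin n) => (1 + ‖y‖ ^ (α - n)) * u y ^ θ) ∧
     Integrable (fun x : EuclideanSpace ℝ (Fin n) => (1 + ‖x‖ ^ (α - n)) * v x ^ κ)) ∧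
    -- (ii)
    (Integrable (fun x : EuclideanSpace ℝ (Fin n) => v x ^ κ) ∧
     Integrable (fun y : EuclideanSpace ℝ (Fin n) => u y ^ θ) ∧
     Tendsto (fun y : EuclideanSpace ℝ (Fin n) => ‖y‖ ^ ((n : ℝ) - α) * u y)
       (comap norm atTop) (nhds (∫ x, v x ^ κ)) ∧
     Tendsto (fun x : EuclideanSpace ℝ (Fin n) => ‖x‖ ^ ((n : ℝ) - α) * v x)
       (comap norm atTop) (nhds (∫ y, u y ^ θ))) ∧
    -- (iii)
    ((∃ C₁ : ℝ, 0 < C₁ ∧ ∀ y : EuclideanSpace ℝ (Fin n),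
        (1 + ‖y‖ ^ (α - n)) / C₁ ≤ u y ∧ u y ≤ C₁ * (1 + ‖y‖ ^ (α - n))) ∧
     (∃ C₂ : ℝ, 0 < C₂ ∧ ∀ x : EuclideanSpace ℝ (Fin n),
        (1 + ‖x‖ ^ (α - n)) / C₂ ≤ v x ∧ v x ≤ C₂ * (1 + ‖x‖ ^ (α - n)))) := by
  have hκm : Measurable fun x => v x ^ κ := by measurability
  have hθm : Measurable fun y => u y ^ θ := by measurability
  have m1 := master n hn α hα u (fun x => v x ^ κ) hu hκm hupos
    (fun x => Real.rpow_pos_of_pos (hvpos x) κ) hueq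
  have hveq' : ∀ x : EuclideanSpace ℝ (Fin n), ENNReal.ofReal (v x) =
      ∫⁻ y, ENNReal.ofReal (dist y x ^ (α - n) * u y ^ θ) := by
    intro x
    rw [hveq x]
    exact lintegral_congr fun y => by rw [dist_comm]
  have m2 := master n hn α hα v (fun y => u y ^ θ) hv hθm hvpos
    (fun y => Real.rpow_pos_of_pos (hupos y) θ) hveq'
  obtain ⟨k1, g1, t1, b1⟩ := m1
  obtain ⟨k2, g2, t2, b2⟩ := m2
  exact ⟨⟨k2, k1⟩, ⟨g1, g2, t1, t2⟩, ⟨b1, b2⟩⟩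
end

section
/- Let 1 ≤ n < α and θ = κ = (n+α)/(n−α). Suppose (u, v) is a pair of positive, everywhere finite, smooth functions on ℝⁿ satisfying u(y) = ∫_{ℝⁿ}|x−y|^{α−n} v(x)^κ dx and v(x) = ∫_{ℝⁿ}|x−y|^{α−n} u(y)^θ dy for all x, y ∈ ℝⁿ. Then for every x ∈ ℝⁿ there exists λ₀(x) > 0 such that for all 0 < λ < λ₀(x): u_{x,λ}(ξ) ≥ u(ξ) for all ξ with |ξ−x| ≥ λ, and v_{x,λ}(η) ≥ v(η) for all η with |η−x| ≥ λ. -/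
open MeasureTheory ENNReal Metric


/-- `(a+b)^p ≤ 2^p a^p + 2^p b^p` for nonneg `a,b` and `p ≥ 0`. -/
lemma add_rpow_le (a b p : ℝ) (ha : 0 ≤ a) (hb : 0 ≤ b) (hp : 0 ≤ p) :
    (a + b) ^ p ≤ 2 ^ p * a ^ p + 2 ^ p * b ^ p := by
  have hmax : a + b ≤ 2 * max a b := by
    rcases le_total a b with h | h
    · simp [max_eq_right h]; linarith
    · simp [max_eq_left h]; linarith
  have h0 : (0:ℝ) ≤ max a b := le_max_of_le_left ha
  have h1 : (a + b) ^ p ≤ (2 * max a b) ^ p :=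
    Real.rpow_le_rpow (by linarith) hmax hp
  have h2 : (2 * max a b) ^ p = 2 ^ p * (max a b) ^ p :=
    Real.mul_rpow (by norm_num) h0
  have h3 : (max a b) ^ p ≤ a ^ p + b ^ p := by
    rcases le_total a b with h | h
    · rw [max_eq_right h]
      have := Real.rpow_nonneg ha p
      linarith
    · rw [max_eq_left h]
      have := Real.rpow_nonneg hb p
      linarith
  calc (a + b) ^ p ≤ 2 ^ p * (max a b) ^ p := by rw [← h2]; exact h1
    _ ≤ 2 ^ p * (a ^ p + b ^ p) := by
        have : (0:ℝ) ≤ 2 ^ p := Real.rpow_nonneg (by norm_num) p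
        nlinarith
    _ = 2 ^ p * a ^ p + 2 ^ p * b ^ p := by ring

/-- Growth bound from the integral representation. -/
lemma growth_bound {n : ℕ} {p : ℝ} (hp : 0 < p)
    (u w : EuclideanSpace ℝ (Fin n) → ℝ)
    (hw : Continuous w) (hwpos : ∀ z, 0 < w z) (hupos : ∀ y, 0 ≤ u y)
    (hueq : ∀ y, ENNReal.ofReal (u y) = ∫⁻ z, ENNReal.ofReal (dist z y ^ p * w z))
    (x : EuclideanSpace ℝ (Fin n)) :
    ∃ C : ℝ, 0 < C ∧ ∀ ξ, u ξ ≤ C * (1 + dist ξ x ^ p) := by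
  have h2p : (0:ℝ) ≤ 2 ^ p := Real.rpow_nonneg (by norm_num) p
  have hwm : Measurable fun z => ENNReal.ofReal (w z) := hw.measurable.ennreal_ofReal
  have hdm : Measurable fun z : EuclideanSpace ℝ (Fin n) => dist z x ^ p :=
    (measurable_dist.comp (measurable_id.prodMk measurable_const)).pow_const p
  have hfm : Measurable fun z => ENNReal.ofReal (dist z x ^ p * w z) :=
    (hdm.mul hw.measurable).ennreal_ofReal
  -- finiteness of I = ∫⁻ w
  set I : ℝ≥0∞ := ∫⁻ z, ENNReal.ofReal (w z) with hI
  have hIfin : I ≠ ⊤ := by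
    have hsplit : I = (∫⁻ z in ball x 1, ENNReal.ofReal (w z)) +
        ∫⁻ z in (ball x 1)ᶜ, ENNReal.ofReal (w z) :=
      (lintegral_add_compl _ measurableSet_ball).symm
    -- ball part
    obtain ⟨z₀, hz₀mem, hz₀⟩ := (isCompact_closedBall x 1).exists_isMaxOn
      ⟨x, mem_closedBall_self zero_le_one⟩ hw.continuousOn
    have hball : (∫⁻ z in ball x 1, ENNReal.ofReal (w z)) ≤
        ENNReal.ofReal (w z₀) * volume (ball x 1) := by
      calc (∫⁻ z in ball x 1, ENNReal.ofReal (w z))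
          ≤ ∫⁻ _ in ball x 1, ENNReal.ofReal (w z₀) :=
            setLIntegral_mono measurable_const (fun z hz =>
              ENNReal.ofReal_le_ofReal (hz₀ (ball_subset_closedBall hz)))
        _ = ENNReal.ofReal (w z₀) * volume (ball x 1) := setLIntegral_const _ _
    have hcompl : (∫⁻ z in (ball x 1)ᶜ, ENNReal.ofReal (w z)) ≤ ENNReal.ofReal (u x) := by
      rw [hueq x]
      calc (∫⁻ z in (ball x 1)ᶜ, ENNReal.ofReal (w z))
          ≤ ∫⁻ z in (ball x 1)ᶜ, ENNReal.ofReal (dist z x ^ p * w z) := by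
            refine setLIntegral_mono hfm (fun z hz => ?_)
            refine ENNReal.ofReal_le_ofReal ?_
            have h1 : (1:ℝ) ≤ dist z x := by
              simpa [mem_ball, not_lt] using hz
            have := Real.one_le_rpow h1 hp.le
            nlinarith [(hwpos z).le]
        _ ≤ ∫⁻ z, ENNReal.ofReal (dist z x ^ p * w z) :=
            setLIntegral_le_lintegral _ _
    rw [hsplit]
    exact ne_top_of_le_ne_top
      (ENNReal.add_ne_top.mpr ⟨ENNReal.mul_ne_top ENNReal.ofReal_ne_top measure_ball_lt_top.ne,
        ENNReal.ofReal_ne_top⟩) (add_le_add hball hcompl)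
  set B := I.toReal with hB
  have hB0 : 0 ≤ B := ENNReal.toReal_nonneg
  have hIB : I = ENNReal.ofReal B := by rw [hB, ENNReal.ofReal_toReal hIfin]
  refine ⟨2 ^ p * u x + 2 ^ p * B + 1, by nlinarith [mul_nonneg h2p (hupos x), mul_nonneg h2p hB0], fun ξ => ?_⟩
  set R := dist ξ x with hR
  have hR0 : 0 ≤ R := dist_nonneg
  have key : ENNReal.ofReal (u ξ) ≤
      ENNReal.ofReal (2 ^ p * u x + 2 ^ p * B * R ^ p) := by
    rw [hueq ξ]
    have hstep : ∀ z, ENNReal.ofReal (dist z ξ ^ p * w z) ≤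
        ENNReal.ofReal (2 ^ p * (dist z x ^ p * w z)) +
        ENNReal.ofReal ((2 ^ p * R ^ p) * w z) := by
      intro z
      rw [← ENNReal.ofReal_add (mul_nonneg h2p (mul_nonneg (Real.rpow_nonneg dist_nonneg p) (hwpos z).le)) (mul_nonneg (mul_nonneg h2p (Real.rpow_nonneg hR0 p)) (hwpos z).le)]
      refine ENNReal.ofReal_le_ofReal ?_
      have htri : dist z ξ ≤ dist z x + R := by
        rw [hR]; exact dist_triangle z x ξ |>.trans (by rw [dist_comm x ξ])
      have h1 : dist z ξ ^ p ≤ (dist z x + R) ^ p :=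
        Real.rpow_le_rpow dist_nonneg htri hp.le
      have h2 := add_rpow_le (dist z x) R p dist_nonneg hR0 hp.le
      have hwz := (hwpos z).le
      nlinarith [Real.rpow_nonneg (dist_nonneg : (0:ℝ) ≤ dist z x) p,
        Real.rpow_nonneg hR0 p, Real.rpow_nonneg (by norm_num : (0:ℝ) ≤ 2) p]
    calc (∫⁻ z, ENNReal.ofReal (dist z ξ ^ p * w z))
        ≤ ∫⁻ z, (ENNReal.ofReal (2 ^ p * (dist z x ^ p * w z)) +
            ENNReal.ofReal ((2 ^ p * R ^ p) * w z)) := lintegral_mono hstep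
      _ = ∫⁻ z, (ENNReal.ofReal (2 ^ p) * ENNReal.ofReal (dist z x ^ p * w z) +
            ENNReal.ofReal (2 ^ p * R ^ p) * ENNReal.ofReal (w z)) := by
          refine lintegral_congr fun z => ?_
          rw [← ENNReal.ofReal_mul h2p, ← ENNReal.ofReal_mul (mul_nonneg h2p (Real.rpow_nonneg hR0 p))]
      _ = (∫⁻ z, ENNReal.ofReal (2 ^ p) * ENNReal.ofReal (dist z x ^ p * w z)) +
          ∫⁻ z, ENNReal.ofReal (2 ^ p * R ^ p) * ENNReal.ofReal (w z) :=
          lintegral_add_left (measurable_const.mul hfm) _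
      _ = ENNReal.ofReal (2 ^ p) * ENNReal.ofReal (u x) +
          ENNReal.ofReal (2 ^ p * R ^ p) * I := by
          rw [lintegral_const_mul _ hfm, lintegral_const_mul _ hwm, ← hueq x]
      _ = ENNReal.ofReal (2 ^ p * u x + 2 ^ p * B * R ^ p) := by
          rw [hIB, ← ENNReal.ofReal_mul h2p,
            ← ENNReal.ofReal_mul (mul_nonneg h2p (Real.rpow_nonneg hR0 p)),
            ← ENNReal.ofReal_add (mul_nonneg h2p (hupos x)) (mul_nonneg (mul_nonneg h2p (Real.rpow_nonneg hR0 p)) hB0)]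
          ring_nf
  have hRp : 0 ≤ R ^ p := Real.rpow_nonneg hR0 p
  have := (ENNReal.ofReal_le_ofReal_iff
    (by nlinarith [mul_nonneg h2p (hupos x), mul_nonneg (mul_nonneg h2p hB0) hRp])).mp key
  nlinarith [mul_nonneg h2p (hupos x), mul_nonneg h2p hB0, mul_nonneg (mul_nonneg h2p hB0) hRp]

set_option maxHeartbeats 1000000 in
lemma moving_sphere_aux {n : ℕ} {p : ℝ} (hp : 0 < p)
    (u w : EuclideanSpace ℝ (Fin n) → ℝ)
    (hu : ContDiff ℝ (⊤ : ℕ∞) u) (hw : Continuous w)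
    (hupos : ∀ y, 0 < u y) (hwpos : ∀ z, 0 < w z)
    (hueq : ∀ y, ENNReal.ofReal (u y) = ∫⁻ z, ENNReal.ofReal (dist z y ^ p * w z))
    (x : EuclideanSpace ℝ (Fin n)) :
    ∃ lam₀ : ℝ, 0 < lam₀ ∧ ∀ lam : ℝ, 0 < lam → lam < lam₀ →
      ∀ ξ, lam ≤ dist ξ x →
        u ξ ≤ (lam / dist ξ x) ^ (-p) * u (x + (lam ^ 2 / dist ξ x ^ 2) • (ξ - x)) := by
  -- minimum of u on the closed unit ball
  obtain ⟨zm, -, hzm⟩ := (isCompact_closedBall x 1).exists_isMinOn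
    ⟨x, mem_closedBall_self zero_le_one⟩ (hu.continuous.continuousOn)
  set m := u zm with hm
  have hm0 : 0 < m := hupos zm
  -- bound on the derivative on the closed unit ball
  have hDu : Continuous fun y => ‖fderiv ℝ u y‖ :=
    ((hu.fderiv_right (m := (⊤ : ℕ∞)) (by simp)).continuous).norm
  obtain ⟨zM, -, hzM⟩ := (isCompact_closedBall x 1).exists_isMaxOn
    ⟨x, mem_closedBall_self zero_le_one⟩ hDu.continuousOn
  set M := ‖fderiv ℝ u zM‖ with hM
  have hM0 : 0 ≤ M := norm_nonneg _
  set β := p / 2 with hβ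
  have hβ0 : 0 < β := by positivity
  set r₀ : ℝ := min 1 (β * m / (M + 1)) with hr₀
  have hr₀0 : 0 < r₀ := lt_min one_pos (by positivity)
  have hr₀1 : r₀ ≤ 1 := min_le_left _ _
  -- growth bound
  obtain ⟨C, hC0, hCb⟩ := growth_bound hp u w hw hwpos (fun y => (hupos y).le) hueq x
  set C' : ℝ := C / r₀ ^ p + C with hC'
  have hC'0 : 0 < C' := by positivity
  refine ⟨min r₀ ((m / C') ^ (1/p)), lt_min hr₀0 (Real.rpow_pos_of_pos (by positivity) _),
    fun lam hlam hlam₀ ξ hξ => ?_⟩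
  have hlamr₀ : lam < r₀ := hlam₀.trans_le (min_le_left _ _)
  have hlam1 : lam ≤ 1 := (hlamr₀.le.trans hr₀1)
  set r := dist ξ x with hr
  have hr0 : 0 < r := hlam.trans_le hξ
  -- the reflected point
  have hq : dist (x + (lam ^ 2 / r ^ 2) • (ξ - x)) x = lam ^ 2 / r := by
    rw [dist_eq_norm, add_sub_cancel_left, norm_smul, Real.norm_eq_abs,
      abs_of_nonneg (by positivity), ← dist_eq_norm, ← hr]
    field_simp
  have hqball : (x + (lam ^ 2 / r ^ 2) • (ξ - x)) ∈ closedBall x 1 := by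
    rw [mem_closedBall, hq]
    calc lam ^ 2 / r ≤ lam ^ 2 / lam := by
          apply div_le_div_of_nonneg_left (by positivity) hlam hξ
      _ = lam := by field_simp [hlam.ne']
      _ ≤ 1 := hlam1
  have hqm : m ≤ u (x + (lam ^ 2 / r ^ 2) • (ξ - x)) := hzm hqball
  -- rewrite the factor
  have hfac : (lam / r) ^ (-p) = r ^ p / lam ^ p := by
    rw [Real.rpow_neg (by positivity), Real.div_rpow hlam.le hr0.le,
      inv_div]
  rcases le_or_gt r r₀ with hcase | hcase
  · -- region 1 : monotonicity along rays
    set ω := r⁻¹ • (ξ - x) with hω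
    have hnω : ‖ω‖ = 1 := by
      rw [hω, norm_smul, Real.norm_eq_abs, abs_of_nonneg (by positivity),
        ← dist_eq_norm, ← hr]
      field_simp
    set g : ℝ → ℝ := fun t => t ^ (-β) * u (x + t • ω) with hg
    have hmem : ∀ t ∈ Set.Ioc (0:ℝ) r₀, (x + t • ω) ∈ closedBall x 1 := by
      intro t ht
      rw [mem_closedBall, dist_eq_norm, add_sub_cancel_left, norm_smul, hnω,
        Real.norm_eq_abs, abs_of_pos ht.1, mul_one]
      exact ht.2.trans hr₀1
    have hanti : StrictAntiOn g (Set.Ioc 0 r₀) := by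
      apply strictAntiOn_of_deriv_neg (convex_Ioc 0 r₀)
      · apply ContinuousOn.mul
        · exact fun t ht => (Real.continuousAt_rpow_const t (-β)
            (Or.inl (ne_of_gt ht.1))).continuousWithinAt
        · exact (hu.continuous.comp (continuous_const.add (continuous_id.smul continuous_const))).continuousOn
      · intro t ht
        rw [interior_Ioc] at ht
        have ht0 : 0 < t := ht.1
        have hd1 : HasDerivAt (fun s : ℝ => s ^ (-β)) (-β * t ^ (-β - 1)) t :=
          Real.hasDerivAt_rpow_const (Or.inl ht0.ne')
        have hdc : HasDerivAt (fun s : ℝ => x + s • ω) ω t := by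
          simpa using ((hasDerivAt_id t).smul_const ω).const_add x
        have hd2 : HasDerivAt (fun s : ℝ => u (x + s • ω))
            (fderiv ℝ u (x + t • ω) ω) t :=
          (hu.differentiable (by simp) (x + t • ω)).hasFDerivAt.comp_hasDerivAt t hdc
        have hder : HasDerivAt g
            (-β * t ^ (-β - 1) * u (x + t • ω) +
              t ^ (-β) * fderiv ℝ u (x + t • ω) ω) t := hd1.mul hd2
        rw [hder.deriv]
        have hmemt : (x + t • ω) ∈ closedBall x 1 := hmem t ⟨ht0, ht.2.le⟩
        have hum : m ≤ u (x + t • ω) := hzm hmemt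
        have hDle : fderiv ℝ u (x + t • ω) ω ≤ M := by
          calc fderiv ℝ u (x + t • ω) ω ≤ ‖fderiv ℝ u (x + t • ω) ω‖ :=
                le_abs_self _
            _ ≤ ‖fderiv ℝ u (x + t • ω)‖ * ‖ω‖ := ContinuousLinearMap.le_opNorm _ _
            _ = ‖fderiv ℝ u (x + t • ω)‖ := by rw [hnω, mul_one]
            _ ≤ M := hzM hmemt
        have htβ : t ^ (-β) = t ^ (-β - 1) * t := by
          rw [← Real.rpow_add_one ht0.ne' (-β - 1)]
          ring_nf
        have htβ1 : 0 < t ^ (-β - 1) := Real.rpow_pos_of_pos ht0 _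
        have htM : t * (M + 1) < β * m := by
          have : t < β * m / (M + 1) := ht.2.trans_le (min_le_right _ _)
          calc t * (M + 1) < (β * m / (M + 1)) * (M + 1) := by
                apply mul_lt_mul_of_pos_right this (by positivity)
            _ = β * m := by field_simp
        have hkey : t * fderiv ℝ u (x + t • ω) ω < β * u (x + t • ω) := by
          have h1 : t * fderiv ℝ u (x + t • ω) ω ≤ t * M :=
            mul_le_mul_of_nonneg_left hDle ht0.le
          have h2 : β * m ≤ β * u (x + t • ω) :=
            mul_le_mul_of_nonneg_left hum hβ0.le
          nlinarith
        rw [htβ]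
        calc -β * t ^ (-β - 1) * u (x + t • ω) +
              t ^ (-β - 1) * t * fderiv ℝ u (x + t • ω) ω
            = t ^ (-β - 1) * (t * fderiv ℝ u (x + t • ω) ω - β * u (x + t • ω)) := by
              ring
          _ < 0 := mul_neg_of_pos_of_neg htβ1 (by linarith)
    -- apply antitonicity at s = lam²/r ≤ r
    set s := lam ^ 2 / r with hs
    have hs0 : 0 < s := by positivity
    have hsr : s ≤ r := by
      rw [hs, div_le_iff₀ hr0]
      nlinarith
    have hsmem : s ∈ Set.Ioc (0:ℝ) r₀ := ⟨hs0, hsr.trans hcase⟩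
    have hrmem : r ∈ Set.Ioc (0:ℝ) r₀ := ⟨hr0, hcase⟩
    have hgle0 : g r ≤ g s := by
      rcases eq_or_lt_of_le hsr with h | h
      · rw [h]
      · exact (hanti hsmem hrmem h).le
    -- unfold g
    have hω1 : x + r • ω = ξ := by
      rw [hω, smul_smul, mul_inv_cancel₀ hr0.ne', one_smul]
      abel
    have hω2 : x + s • ω = x + (lam ^ 2 / r ^ 2) • (ξ - x) := by
      rw [hω, smul_smul, hs]
      congr 2
      field_simp
    simp only [hg] at hgle0
    rw [hω1, hω2] at hgle0
    have hgle : r ^ (-β) * u ξ ≤ s ^ (-β) * u (x + (lam ^ 2 / r ^ 2) • (ξ - x)) := hgle0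
    -- from g r ≤ g s derive the claim
    have hrβ : 0 < r ^ (-β) := Real.rpow_pos_of_pos hr0 _
    have hsβ : 0 < s ^ (-β) := Real.rpow_pos_of_pos hs0 _
    have hrβp : 0 < r ^ β := Real.rpow_pos_of_pos hr0 _
    have hcancel : r ^ β * r ^ (-β) = 1 := by
      rw [← Real.rpow_add hr0]
      simp
    have hsval : s ^ (-β) = r ^ β / lam ^ p := by
      rw [hs, Real.rpow_neg (by positivity), Real.div_rpow (by positivity) hr0.le]
      have h1 : (lam ^ 2 : ℝ) ^ β = lam ^ p := by
        rw [← Real.rpow_natCast lam 2, ← Real.rpow_mul hlam.le]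
        congr 1
        push_cast
        rw [hβ]; ring
      rw [h1, inv_div]
    have hββ : β + β = p := by rw [hβ]; ring
    have hrr : r ^ β * r ^ β = r ^ p := by rw [← Real.rpow_add hr0, hββ]
    calc u ξ = r ^ β * (r ^ (-β) * u ξ) := by rw [← mul_assoc, hcancel, one_mul]
      _ ≤ r ^ β * (s ^ (-β) * u (x + (lam ^ 2 / r ^ 2) • (ξ - x))) :=
          mul_le_mul_of_nonneg_left hgle hrβp.le
      _ = (r ^ β * r ^ β / lam ^ p) * u (x + (lam ^ 2 / r ^ 2) • (ξ - x)) := by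
          rw [hsval]; ring
      _ = (lam / r) ^ (-p) * u (x + (lam ^ 2 / r ^ 2) • (ξ - x)) := by
          rw [hfac, hrr]
  · -- region 2 : growth bound
    have hur : u ξ ≤ C' * r ^ p := by
      have h1 := hCb ξ
      have hrp : r₀ ^ p ≤ r ^ p := Real.rpow_le_rpow hr₀0.le hcase.le hp.le
      have hr₀p : 0 < r₀ ^ p := Real.rpow_pos_of_pos hr₀0 _
      have h2 : C * 1 ≤ C / r₀ ^ p * r ^ p := by
        rw [div_mul_eq_mul_div, le_div_iff₀ hr₀p]
        nlinarith
      have hrp0 : 0 < r ^ p := Real.rpow_pos_of_pos hr0 _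
      calc u ξ ≤ C * (1 + r ^ p) := h1
        _ = C * 1 + C * r ^ p := by ring
        _ ≤ C / r₀ ^ p * r ^ p + C * r ^ p := by linarith
        _ = C' * r ^ p := by rw [hC']; ring
    have hlamp : C' * lam ^ p ≤ m := by
      have hlt : lam < (m / C') ^ (1/p) := hlam₀.trans_le (min_le_right _ _)
      have : lam ^ p < ((m / C') ^ (1/p)) ^ p := Real.rpow_lt_rpow hlam.le hlt hp
      rw [← Real.rpow_mul (by positivity), one_div, inv_mul_cancel₀ hp.ne',
        Real.rpow_one] at this
      calc C' * lam ^ p ≤ C' * (m / C') := by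
            apply mul_le_mul_of_nonneg_left this.le hC'0.le
        _ = m := by field_simp
    rw [hfac]
    have hrp0 : 0 < r ^ p := Real.rpow_pos_of_pos hr0 _
    have hlamp0 : 0 < lam ^ p := Real.rpow_pos_of_pos hlam _
    calc u ξ ≤ C' * r ^ p := hur
      _ ≤ (m / lam ^ p) * r ^ p := by
          apply mul_le_mul_of_nonneg_right _ hrp0.le
          rw [le_div_iff₀ hlamp0]
          linarith [hlamp]
      _ = r ^ p / lam ^ p * m := by ring
      _ ≤ r ^ p / lam ^ p * u (x + (lam ^ 2 / r ^ 2) • (ξ - x)) := by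
          apply mul_le_mul_of_nonneg_left hqm (by positivity)

/-- The Kelvin-type transform
`ω_{x,λ}(ξ) = (λ/|ξ-x|)^(n-α) ω(x + λ²(ξ-x)/|ξ-x|²)`. -/
noncomputable def kelvin (n : ℕ) (α : ℝ) (ω : EuclideanSpace ℝ (Fin n) → ℝ)
    (x : EuclideanSpace ℝ (Fin n)) (lam : ℝ) (ξ : EuclideanSpace ℝ (Fin n)) : ℝ :=
  (lam / dist ξ x) ^ ((n : ℝ) - α) * ω (x + (lam ^ 2 / dist ξ x ^ 2) • (ξ - x))

/-- **Start of the moving sphere procedure** (Lemma 3.7): for `1 ≤ n < α` and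
`θ = κ = (n+α)/(n-α)`, if `(u, v)` is a pair of positive finite smooth solutions of the
integral system, then for every `x ∈ ℝⁿ` there is `λ₀(x) > 0` such that for all
`0 < λ < λ₀(x)`, `u_{x,λ} ≥ u` and `v_{x,λ} ≥ v` on `{|ξ - x| ≥ λ}`. -/
theorem moving_sphere_start (n : ℕ) (hn : 1 ≤ n) (α : ℝ)
    (hα : (n : ℝ) < α)
    (u v : EuclideanSpace ℝ (Fin n) → ℝ)
    (husmooth : ContDiff ℝ (⊤ : ℕ∞) u) (hvsmooth : ContDiff ℝ (⊤ : ℕ∞) v)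
    (hupos : ∀ y, 0 < u y) (hvpos : ∀ x, 0 < v x)
    (hueq : ∀ y, ENNReal.ofReal (u y) =
      ∫⁻ x, ENNReal.ofReal (dist x y ^ (α - n) * v x ^ (((n : ℝ) + α) / ((n : ℝ) - α))))
    (hveq : ∀ x, ENNReal.ofReal (v x) =
      ∫⁻ y, ENNReal.ofReal (dist x y ^ (α - n) * u y ^ (((n : ℝ) + α) / ((n : ℝ) - α)))) :
    ∀ x : EuclideanSpace ℝ (Fin n), ∃ lam₀ : ℝ, 0 < lam₀ ∧
      ∀ lam : ℝ, 0 < lam → lam < lam₀ →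
        (∀ ξ : EuclideanSpace ℝ (Fin n), lam ≤ dist ξ x → u ξ ≤ kelvin n α u x lam ξ) ∧
        (∀ η : EuclideanSpace ℝ (Fin n), lam ≤ dist η x → v η ≤ kelvin n α v x lam η) := by
  intro x
  set p : ℝ := α - n with hpdef
  have hp : 0 < p := sub_pos.mpr hα
  set κ : ℝ := ((n : ℝ) + α) / ((n : ℝ) - α) with hκdef
  have hexp : (n : ℝ) - α = -p := by rw [hpdef]; ring
  -- aux for u
  have hwv : Continuous fun z => v z ^ κ :=
    hvsmooth.continuous.rpow_const (fun z => Or.inl (hvpos z).ne')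
  have hwvpos : ∀ z, 0 < v z ^ κ := fun z => Real.rpow_pos_of_pos (hvpos z) κ
  obtain ⟨lamu, hlamu, hu⟩ := moving_sphere_aux hp u (fun z => v z ^ κ)
    husmooth hwv hupos hwvpos hueq x
  -- aux for v
  have hwu : Continuous fun z => u z ^ κ :=
    husmooth.continuous.rpow_const (fun z => Or.inl (hupos z).ne')
  have hwupos : ∀ z, 0 < u z ^ κ := fun z => Real.rpow_pos_of_pos (hupos z) κ
  have hveq' : ∀ y, ENNReal.ofReal (v y) =
      ∫⁻ z, ENNReal.ofReal (dist z y ^ p * u z ^ κ) := by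
    intro y
    rw [hveq y]
    exact lintegral_congr fun z => by rw [dist_comm]
  obtain ⟨lamv, hlamv, hv⟩ := moving_sphere_aux hp v (fun z => u z ^ κ)
    hvsmooth hwu hvpos hwupos hveq' x
  refine ⟨min lamu lamv, lt_min hlamu hlamv, fun lam h0 hlt => ⟨fun ξ hξ => ?_, fun η hη => ?_⟩⟩
  · rw [kelvin, hexp]
    exact hu lam h0 (hlt.trans_le (min_le_left _ _)) ξ hξ
  · rw [kelvin, hexp]
    exact hv lam h0 (hlt.trans_le (min_le_right _ _)) η hη
end

section
/- Let n ≥ 1 and μ ∈ ℝ, and let f: ℝⁿ → (−∞, +∞) be a function such that for all x, y ∈ ℝⁿ and all λ with 0 < λ ≤ |y−x| one has (λ/|y−x|)^μ · f(x + λ²(y−x)/|y−x|²) ≥ f(y). Then f is constant. -/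
/-- **First calculus lemma for the method of moving spheres** (Lemma 3.9, Li–Nirenberg):
for `n ≥ 1` and `μ ∈ ℝ`, if `f : ℝⁿ → ℝ` satisfies
`(λ/|y-x|)^μ f(x + λ²(y-x)/|y-x|²) ≥ f(y)` for all `x, y` and all `0 < λ ≤ |y-x|`,
then `f` is constant. -/
theorem moving_sphere_calculus_ge (n : ℕ) (hn : 1 ≤ n) (μ : ℝ)
    (f : EuclideanSpace ℝ (Fin n) → ℝ)
    (h : ∀ x y : EuclideanSpace ℝ (Fin n), ∀ lam : ℝ, 0 < lam → lam ≤ dist y x →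
      f y ≤ (lam / dist y x) ^ μ * f (x + (lam ^ 2 / dist y x ^ 2) • (y - x))) :
    ∃ c : ℝ, ∀ y : EuclideanSpace ℝ (Fin n), f y = c := by
  -- Key step: for a ≠ b and 0 < t < 1, f b ≤ t^μ * f a.
  have key : ∀ a b : EuclideanSpace ℝ (Fin n), a ≠ b → ∀ t : ℝ, 0 < t → t < 1 →
      f b ≤ t ^ μ * f a := by
    intro a b hab t ht ht1
    have hc : (0:ℝ) < 1 - t ^ 2 := by nlinarith
    set x : EuclideanSpace ℝ (Fin n) := (1 - t ^ 2)⁻¹ • (a - t ^ 2 • b) with hx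
    have hbx : b - x = (1 - t ^ 2)⁻¹ • (b - a) := by
      have h1 : (1 - t ^ 2) • (b - x) = b - a := by
        rw [hx, smul_sub, smul_smul, mul_inv_cancel₀ hc.ne']
        module
      rw [← h1, smul_smul, inv_mul_cancel₀ hc.ne', one_smul]
    have hba : (0:ℝ) < ‖b - a‖ := by
      rw [norm_pos_iff, sub_ne_zero]; exact fun e => hab e.symm
    have hdist : dist b x = (1 - t ^ 2)⁻¹ * ‖b - a‖ := by
      rw [dist_eq_norm, hbx, norm_smul, Real.norm_eq_abs,
        abs_of_pos (inv_pos.mpr hc)]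
    have hd : (0:ℝ) < dist b x := by
      rw [hdist]; positivity
    have := h x b (t * dist b x) (by positivity)
      (by nlinarith)
    have hratio : t * dist b x / dist b x = t := by
      field_simp
    have hratio2 : (t * dist b x) ^ 2 / dist b x ^ 2 = t ^ 2 := by
      field_simp
    rw [hratio, hratio2] at this
    have himg : x + t ^ 2 • (b - x) = a := by
      apply smul_right_injective (EuclideanSpace ℝ (Fin n)) hc.ne'
      show (1 - t ^ 2) • (x + t ^ 2 • (b - x)) = (1 - t ^ 2) • a
      rw [hbx, hx]
      match_scalars <;> field_simp <;> ring
    rwa [himg] at this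
  -- From the key step, f b ≤ f a for all a ≠ b by letting t → 1⁻.
  have le : ∀ a b : EuclideanSpace ℝ (Fin n), f b ≤ f a := by
    intro a b
    rcases eq_or_ne a b with rfl | hab
    · exact le_refl _
    have htend : Filter.Tendsto (fun t : ℝ => t ^ μ * f a) (nhdsWithin 1 (Set.Iio 1))
        (nhds ((1:ℝ) ^ μ * f a)) := by
      apply Filter.Tendsto.mul _ tendsto_const_nhds
      exact ((Real.continuousAt_rpow_const 1 μ (Or.inl one_ne_zero)).continuousWithinAt).tendsto
    rw [Real.one_rpow, one_mul] at htend
    refine ge_of_tendsto htend ?_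
    filter_upwards [Ioo_mem_nhdsLT_of_mem (show (1:ℝ) ∈ Set.Ioc (0:ℝ) 1 from ⟨one_pos, le_refl 1⟩)]
      with t ht
    exact key a b hab t ht.1 ht.2
  exact ⟨f 0, fun y => le_antisymm (le 0 y) (le y 0)⟩
end

section
/- Let n ≥ 1, μ ∈ ℝ, and let f ∈ C⁰(ℝⁿ). Suppose that for every x ∈ ℝⁿ there exists λ > 0 such that (λ/|y−x|)^μ · f(x + λ²(y−x)/|y−x|²) = f(y) for all y ∈ ℝⁿ \ {x}. Then there exist a ≥ 0, d > 0 and x̄ ∈ ℝⁿ such that f(x) = a·(1/(d + |x−x̄|²))^{μ/2} for all x ∈ ℝⁿ, or f(x) = −a·(1/(d + |x−x̄|²))^{μ/2} for all x ∈ ℝⁿ. -/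
/-!
Letting `y → ∞` in the symmetry about the sphere of radius `λₓ` centred at `x` gives
`|y - x|^μ f(y) → λₓ^μ f(x)`; since `|y - x| / |y - x'| → 1`, the value `L = λₓ^μ f(x)` does not
depend on `x`. If `μ = 0` or `L = 0`, `f` is constant. Otherwise `G(x) = λₓ² = (L / f(x))^(2/μ)`
is continuous, positive and satisfies `G(y) G(x) = |y - x|² G(y*)`, `y*` the inversion of `y` in
that sphere. Hence `G` grows like `|y|²` and attains its minimum at some `x̄`; then
`ψ = G - |· - x̄|²` is nonnegative, and the same equation gives `|ψ(y) - ψ(x)| ≤ |y - x|²`, so `ψ`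
has zero derivative and `G(x) = G(x̄) + |x - x̄|²`.
-/

open Filter Topology Set Bornology Metric EuclideanGeometry

theorem eq_of_abs_sub_le_mul_norm_sub_sq {E : Type*} [NormedAddCommGroup E] [NormedSpace ℝ E]
    {ψ : E → ℝ} {C : ℝ} (h : ∀ x y, |ψ y - ψ x| ≤ C * ‖y - x‖ ^ 2) (x y : E) : ψ x = ψ y := by
  have hderiv : ∀ x, HasFDerivAt ψ (0 : E →L[ℝ] ℝ) x := fun x => by
    rw [hasFDerivAt_iff_isLittleO_nhds_zero]
    refine (Asymptotics.IsBigO.of_bound C (Eventually.of_forall fun v => ?_)).trans_isLittleO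
      (Asymptotics.isLittleO_norm_pow_id one_lt_two)
    simpa using h x (x + v)
  exact is_const_of_fderiv_eq_zero (fun x => (hderiv x).differentiableAt)
    (fun x => (hderiv x).fderiv) x y

theorem tendsto_dist_div_dist_cobounded {X : Type*} [PseudoMetricSpace X] (x x' : X) :
    Tendsto (fun y => dist y x / dist y x') (cobounded X) (𝓝 1) := by
  have hx' := tendsto_dist_right_cobounded_atTop x'
  have hsmall : Tendsto (fun y => (dist y x - dist y x') / dist y x') (cobounded X) (𝓝 0) := by
    refine squeeze_zero_norm (fun y => ?_)
      ((tendsto_const_nhds (x := dist x x')).div_atTop hx')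
    rw [norm_div, Real.norm_eq_abs, Real.norm_of_nonneg dist_nonneg, dist_comm y x,
      dist_comm y x']
    exact div_le_div_of_nonneg_right (abs_dist_sub_le x x' y) dist_nonneg
  have hlim := hsmall.const_add 1
  rw [add_zero] at hlim
  refine hlim.congr' ?_
  filter_upwards [hx'.eventually_gt_atTop 0] with y hy
  field_simp
  ring

theorem rpow_rpow_two_div {a μ : ℝ} (ha : 0 ≤ a) (hμ : μ ≠ 0) : (a ^ μ) ^ (2 / μ) = a ^ 2 := by
  rw [← Real.rpow_mul ha, mul_div_cancel₀ _ hμ, Real.rpow_two]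

variable {E : Type*} [NormedAddCommGroup E] [InnerProductSpace ℝ E]

theorem inversion_eq_add_smul (x : E) (R : ℝ) (y : E) :
    inversion x R y = x + (R ^ 2 / dist y x ^ 2) • (y - x) := by
  rw [inversion, div_pow, vsub_eq_sub, vadd_eq_add, add_comm]

theorem tendsto_inversion_cobounded (x : E) (R : ℝ) :
    Tendsto (inversion x R) (cobounded E) (𝓝 x) := by
  rw [tendsto_iff_dist_tendsto_zero]
  simp_rw [dist_inversion_center]
  exact tendsto_const_nhds.div_atTop (tendsto_dist_right_cobounded_atTop x)

section InversionEquation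

variable {G : E → ℝ}

theorem tendsto_cobounded_atTop_of_mul_eq_dist_sq_mul {x : E} (hx : 0 < G x)
    (hc : ContinuousAt G x)
    (hG : ∀ y, y ≠ x → G y * G x = dist y x ^ 2 * G (inversion x √(G x) y)) :
    Tendsto G (cobounded E) atTop := by
  have hratio : Tendsto (fun y => G (inversion x √(G x) y) / G x) (cobounded E) (𝓝 1) := by
    simpa [hx.ne'] using (hc.tendsto.comp (tendsto_inversion_cobounded x √(G x))).div_const (G x)
  refine (((tendsto_pow_atTop two_ne_zero).comp
    (tendsto_dist_right_cobounded_atTop x)).atTop_mul_pos one_pos hratio).congr' ?_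
  filter_upwards [(tendsto_dist_right_cobounded_atTop x).eventually_gt_atTop 0] with y hy
  simp only [Function.comp_apply]
  field_simp
  linear_combination -hG y (dist_pos.1 hy)

theorem norm_sub_sq_le_of_mul_eq_dist_sq_mul {xb : E} (hpos : 0 < G xb)
    (hmin : ∀ y, G xb ≤ G y)
    (hG : ∀ y, y ≠ xb → G y * G xb = dist y xb ^ 2 * G (inversion xb √(G xb) y)) (y : E) :
    ‖y - xb‖ ^ 2 ≤ G y := by
  rcases eq_or_ne y xb with rfl | hy
  · simpa using hpos.le
  refine le_of_mul_le_mul_right ?_ hpos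
  rw [hG y hy, ← dist_eq_norm]
  exact mul_le_mul_of_nonneg_left (hmin _) (sq_nonneg _)

theorem mul_sub_eq_dist_sq_mul_sub {x y xb : E} (hx : 0 < G x) (hy : y ≠ x)
    (hG : G y * G x = dist y x ^ 2 * G (inversion x √(G x) y)) :
    G x * ((G y - ‖y - xb‖ ^ 2) - (G x - ‖x - xb‖ ^ 2)) =
      dist y x ^ 2 * ((G (inversion x √(G x) y) - ‖inversion x √(G x) y - xb‖ ^ 2)
        - (G x - ‖x - xb‖ ^ 2)) := by
  have hr : 0 < ‖y - x‖ := norm_pos_iff.2 (sub_ne_zero.2 hy)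
  have hy' : y - xb = (x - xb) + (y - x) := by abel
  have hw : inversion x √(G x) y - xb = (x - xb) + (G x / ‖y - x‖ ^ 2) • (y - x) := by
    rw [inversion_eq_add_smul, Real.sq_sqrt hx.le, dist_eq_norm]
    abel
  rw [dist_eq_norm] at hG
  rw [hw, hy', norm_add_sq_real, norm_add_sq_real, norm_smul, inner_smul_right, Real.norm_eq_abs,
    abs_of_nonneg (by positivity), dist_eq_norm]
  field_simp
  linear_combination hG

theorem exists_eq_add_norm_sub_sq_of_mul_eq_dist_sq_mul [ProperSpace E] (hc : Continuous G)
    (hpos : ∀ x, 0 < G x)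
    (hG : ∀ x y, y ≠ x → G y * G x = dist y x ^ 2 * G (inversion x √(G x) y)) :
    ∃ xb, ∀ x, G x = G xb + ‖x - xb‖ ^ 2 := by
  obtain ⟨xb, hmin⟩ := hc.exists_forall_le (cobounded_eq_cocompact (α := E) ▸
    tendsto_cobounded_atTop_of_mul_eq_dist_sq_mul (hpos 0) hc.continuousAt (hG 0))
  set ψ := fun x => G x - ‖x - xb‖ ^ 2
  have hψ : ∀ x, 0 ≤ ψ x := fun x =>
    sub_nonneg.2 (norm_sub_sq_le_of_mul_eq_dist_sq_mul (hpos xb) hmin (hG xb) x)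
  have hlow : ∀ x y, -‖y - x‖ ^ 2 ≤ ψ y - ψ x := by
    intro x y
    rcases eq_or_ne y x with rfl | hy
    · simp
    have hψG : ψ x ≤ G x := sub_le_self _ (sq_nonneg _)
    refine le_of_mul_le_mul_left ?_ (hpos x)
    rw [mul_sub_eq_dist_sq_mul_sub (hpos x) hy (hG x y hy), dist_eq_norm]
    nlinarith [hψ (inversion x √(G x) y), mul_le_mul_of_nonneg_left hψG (sq_nonneg ‖y - x‖)]
  have hquad : ∀ x y, |ψ y - ψ x| ≤ 1 * ‖y - x‖ ^ 2 := fun x y => by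
    rw [one_mul, abs_le]
    refine ⟨hlow x y, ?_⟩
    have := hlow y x
    rw [norm_sub_rev] at this
    linarith
  refine ⟨xb, fun x => ?_⟩
  have := eq_of_abs_sub_le_mul_norm_sub_sq hquad x xb
  simp only [ψ, sub_self, norm_zero] at this
  linarith

end InversionEquation

section KelvinTransform

noncomputable def kelvinTransform (μ : ℝ) (x : E) (lam : ℝ) (f : E → ℝ) (y : E) : ℝ :=
  (lam / dist y x) ^ μ * f (inversion x lam y)

variable {μ : ℝ} {f : E → ℝ}

theorem tendsto_dist_rpow_mul_of_eqOn_kelvinTransform {lam : ℝ} {x : E}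
    (hlam : 0 ≤ lam) (hf : ContinuousAt f x) (hK : EqOn (kelvinTransform μ x lam f) f {x}ᶜ) :
    Tendsto (fun y => dist y x ^ μ * f y) (cobounded E) (𝓝 (lam ^ μ * f x)) := by
  refine (tendsto_const_nhds.mul (hf.tendsto.comp (tendsto_inversion_cobounded x lam))).congr' ?_
  filter_upwards [(tendsto_dist_right_cobounded_atTop x).eventually_gt_atTop 0] with y hy
  have := (Real.rpow_pos_of_pos hy μ).ne'
  rw [← hK (dist_pos.1 hy), kelvinTransform, Real.div_rpow hlam dist_nonneg]
  field_simp
  simp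

theorem rpow_mul_eq_of_eqOn_kelvinTransform [Nontrivial E] {lam lam' : ℝ} {x x' : E}
    (hlam : 0 ≤ lam) (hlam' : 0 ≤ lam') (hfx : ContinuousAt f x)
    (hfx' : ContinuousAt f x') (hK : EqOn (kelvinTransform μ x lam f) f {x}ᶜ)
    (hK' : EqOn (kelvinTransform μ x' lam' f) f {x'}ᶜ) :
    lam ^ μ * f x = lam' ^ μ * f x' := by
  have hratio : Tendsto (fun y => (dist y x / dist y x') ^ μ) (cobounded E) (𝓝 1) := by
    simpa using (tendsto_dist_div_dist_cobounded x x').rpow_const (Or.inl one_ne_zero)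
  have hlim := hratio.mul (tendsto_dist_rpow_mul_of_eqOn_kelvinTransform hlam' hfx' hK')
  rw [one_mul] at hlim
  refine tendsto_nhds_unique (tendsto_dist_rpow_mul_of_eqOn_kelvinTransform hlam hfx hK)
    (hlim.congr' ?_)
  filter_upwards [(tendsto_dist_right_cobounded_atTop x').eventually_gt_atTop 0] with y hy
  have := (Real.rpow_pos_of_pos hy μ).ne'
  rw [Real.div_rpow dist_nonneg dist_nonneg]
  field_simp

theorem div_rpow_two_div_mul_sq_eq_of_eqOn_kelvinTransform {L lam : ℝ} {x y : E} (hμ : μ ≠ 0)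
    (hlam : 0 < lam) (hpos : 0 < L / f (inversion x lam y))
    (hK : EqOn (kelvinTransform μ x lam f) f {x}ᶜ) (hy : y ≠ x) :
    (L / f y) ^ (2 / μ) * lam ^ 2 = dist y x ^ 2 * (L / f (inversion x lam y)) ^ (2 / μ) := by
  have hr := dist_pos.2 hy
  rw [← hK hy, kelvinTransform, div_mul_eq_div_div_swap,
    Real.div_rpow hpos.le (by positivity), rpow_rpow_two_div (by positivity) hμ]
  field_simp

theorem exists_eq_mul_rpow_of_eqOn_kelvinTransform [ProperSpace E] {L : ℝ} (hf : Continuous f)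
    (h : ∀ x, ∃ lam > 0, lam ^ μ * f x = L ∧ EqOn (kelvinTransform μ x lam f) f {x}ᶜ) :
    ∃ d > 0, ∃ xb, ∀ x, f x = L * (1 / (d + ‖x - xb‖ ^ 2)) ^ (μ / 2) := by
  by_cases hdeg : μ = 0 ∨ L = 0
  · refine ⟨1, one_pos, 0, fun x => ?_⟩
    obtain ⟨lam, hlam, hx, -⟩ := h x
    rcases hdeg with rfl | rfl
    · simpa using hx
    · simpa [(Real.rpow_pos_of_pos hlam μ).ne'] using hx
  obtain ⟨hμ, hL⟩ := not_or.1 hdeg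
  have hratio : ∀ x lam, lam ^ μ * f x = L → L / f x = lam ^ μ := fun x lam hx => by
    have hfx : f x ≠ 0 := fun h0 => hL (by rw [← hx, h0, mul_zero])
    rw [← hx, mul_div_cancel_right₀ _ hfx]
  have hpos : ∀ x, 0 < L / f x := fun x => by
    obtain ⟨lam, hlam, hx, -⟩ := h x
    rw [hratio x lam hx]
    exact Real.rpow_pos_of_pos hlam μ
  set G : E → ℝ := fun x => (L / f x) ^ (2 / μ)
  have hG_sq : ∀ x lam, 0 < lam → lam ^ μ * f x = L → G x = lam ^ 2 := fun x lam hlam hx => by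
    simp only [G, hratio x lam hx, rpow_rpow_two_div hlam.le hμ]
  have hGc : Continuous G := by
    refine (continuous_const.div hf fun x h0 => ?_).rpow_const fun x => Or.inl (hpos x).ne'
    simpa [h0] using hpos x
  have hGeq : ∀ x y, y ≠ x → G y * G x = dist y x ^ 2 * G (inversion x √(G x) y) := by
    intro x y hy
    obtain ⟨lam, hlam, hx, hK⟩ := h x
    rw [hG_sq x lam hlam hx, Real.sqrt_sq hlam.le]
    exact div_rpow_two_div_mul_sq_eq_of_eqOn_kelvinTransform hμ hlam (hpos _) hK hy
  obtain ⟨xb, hxb⟩ := exists_eq_add_norm_sub_sq_of_mul_eq_dist_sq_mul hGc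
    (fun x => Real.rpow_pos_of_pos (hpos x) _) hGeq
  refine ⟨G xb, Real.rpow_pos_of_pos (hpos xb) _, xb, fun x => ?_⟩
  obtain ⟨lam, hlam, hx, -⟩ := h x
  have hpow : (lam ^ 2) ^ (μ / 2) = lam ^ μ := by
    rw [← Real.rpow_two, ← Real.rpow_mul hlam.le, mul_div_cancel₀ _ two_ne_zero]
  rw [← hxb x, hG_sq x lam hlam hx, one_div, Real.inv_rpow (sq_nonneg _), hpow, ← hx]
  field_simp [(Real.rpow_pos_of_pos hlam μ).ne']

end KelvinTransform

/-- **Second calculus lemma for the method of moving spheres** (Lemma 3.10, Li–Nirenberg):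
for `n ≥ 1`, `μ ∈ ℝ` and `f ∈ C⁰(ℝⁿ)`, if for every `x ∈ ℝⁿ` there is `λ > 0` with
`(λ/|y-x|)^μ f(x + λ²(y-x)/|y-x|²) = f(y)` for all `y ≠ x`, then
`f ≡ ± a (1/(d + |x - x̄|²))^(μ/2)` for some `a ≥ 0`, `d > 0` and `x̄ ∈ ℝⁿ`. -/
theorem moving_sphere_calculus_eq (n : ℕ) (hn : 1 ≤ n) (μ : ℝ)
    (f : EuclideanSpace ℝ (Fin n) → ℝ) (hf : Continuous f)
    (h : ∀ x : EuclideanSpace ℝ (Fin n), ∃ lam : ℝ, 0 < lam ∧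
      ∀ y : EuclideanSpace ℝ (Fin n), y ≠ x →
        (lam / dist y x) ^ μ * f (x + (lam ^ 2 / dist y x ^ 2) • (y - x)) = f y) :
    ∃ (a d : ℝ) (xb : EuclideanSpace ℝ (Fin n)), 0 ≤ a ∧ 0 < d ∧
      ((∀ x, f x = a * (1 / (d + ‖x - xb‖ ^ 2)) ^ (μ / 2)) ∨
       (∀ x, f x = -a * (1 / (d + ‖x - xb‖ ^ 2)) ^ (μ / 2))) := by
  have : Nonempty (Fin n) := ⟨⟨0, hn⟩⟩
  have hK : ∀ x, ∃ lam > 0, EqOn (kelvinTransform μ x lam f) f {x}ᶜ := fun x => by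
    obtain ⟨lam, hlam, hx⟩ := h x
    exact ⟨lam, hlam, fun y hy => by rw [kelvinTransform, inversion_eq_add_smul]; exact hx y hy⟩
  choose lam hlam hK using hK
  set L := lam 0 ^ μ * f 0
  have hL : ∀ x, lam x ^ μ * f x = L := fun x =>
    rpow_mul_eq_of_eqOn_kelvinTransform (hlam x).le (hlam 0).le hf.continuousAt hf.continuousAt
      (hK x) (hK 0)
  obtain ⟨d, hd, xb, hfx⟩ :=
    exists_eq_mul_rpow_of_eqOn_kelvinTransform hf fun x => ⟨lam x, hlam x, hL x, hK x⟩
  refine ⟨|L|, d, xb, abs_nonneg L, hd, ?_⟩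
  rcases le_or_gt 0 L with hL0 | hL0
  · exact Or.inl fun x => by rw [hfx, abs_of_nonneg hL0]
  · exact Or.inr fun x => by rw [hfx, abs_of_neg hL0, neg_neg]
end
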